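/- arXiv:1102.0072 — 9 statements merged into one kernel-verified Lean document; each statement's English description precedes it below -/
import Mathlib

section
/- For every field F and every natural number n ≥ 1 there exists a tensor T : [n] × [n] × [⌊lg n⌋ + 1] → F taking only the values 0 and 1 whose tensor rank over F is exactly 2n − 2H(n) + 1, where H(n) is the number of 1s in the binary expansion of n. -/
/-!
Slice `0` of the tensor `U_n` is the permutation matrix exchanging `2c` and `2c + 1` for
`c < ⌊n/2⌋`, and its remaining slices carry a copy of `U_{⌊n/2⌋}` on the even rows and
columns.
Splitting off slice `0` gives `rank U_n ≤ 2⌊n/2⌋ + rank U_{⌊n/2⌋}`.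

The reverse inequality is the substitution method. The odd rows of `U_n` are linearly
independent, already in slice `0`, so a decomposition with `r` terms can be modified by
multiples of them into one with `r - ⌊n/2⌋` terms; likewise for the odd columns of the
even rows. Odd rows and columns vanish outside slice `0`, so these modifications do not touch
the higher slices on even indices, where `U_{⌊n/2⌋}` survives with `r - 2⌊n/2⌋` terms.
Both bounds follow the recursion `ρ(n) = 2⌊n/2⌋ + ρ(⌊n/2⌋)` of `ρ(n) = 2n - 2H(n) + 1`.
-/

/-- The tensor rank of an order-3 tensor `T : [n₁] × [n₂] × [n₃] → F`:
the least `r` such that `T` is the sum of `r` simple tensors. -/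
noncomputable def rank3 {F : Type*} [Field F] {n1 n2 n3 : ℕ}
    (T : Fin n1 → Fin n2 → Fin n3 → F) : ℕ :=
  sInf {r : ℕ | ∃ (a : Fin r → Fin n1 → F) (b : Fin r → Fin n2 → F) (c : Fin r → Fin n3 → F),
    ∀ i j k, T i j k = ∑ l, a l i * b l j * c l k}

open Submodule Set

section Evaluation

variable {F ι α β : Type*} [Field F]

theorem apply_eq_of_sub_mem_span {v : ι → α → β → F} {x y : α → β → F} {j : α} {k : β}
    (hv : ∀ c, v c j k = 0) (h : x - y ∈ span F (range v)) : x j k = y j k := by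
  have hker :
      span F (range v) ≤ LinearMap.ker ((LinearMap.proj k).comp (LinearMap.proj j)) :=
    span_le.mpr (by rintro _ ⟨c, rfl⟩; simpa using hv c)
  simpa [sub_eq_zero] using hker h

theorem linearIndependent_of_apply_eq_single [DecidableEq ι] {v : ι → α → β → F}
    (p : ι → α) (k : β) (hv : ∀ c c', v c (p c') k = (Pi.single c 1 : ι → F) c') :
    LinearIndependent F v := by
  let L : (α → β → F) →ₗ[F] ι → F := LinearMap.pi fun c' =>
    (LinearMap.proj (R := F) (φ := fun _ : β => F) k).comp (LinearMap.proj (p c'))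
  have hL : L ∘ v = fun c => Pi.single c 1 := by
    funext c c'
    simp [L, hv]
  exact .of_comp L (hL ▸ Pi.linearIndependent_single_one ι F)

end Evaluation

section SumOfSimple

variable {F : Type*} [Field F] {n1 n2 n3 : ℕ}

def IsSumOfSimple (r : ℕ) (X : Fin n1 → Fin n2 → Fin n3 → F) : Prop :=
  ∃ (a : Fin r → Fin n1 → F) (b : Fin r → Fin n2 → F) (c : Fin r → Fin n3 → F),
    ∀ i j k, X i j k = ∑ l, a l i * b l j * c l k

namespace IsSumOfSimple

variable {r s : ℕ} {X Y : Fin n1 → Fin n2 → Fin n3 → F}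

theorem comp {m1 m2 m3 : ℕ} (hX : IsSumOfSimple r X)
    (f : Fin m1 → Fin n1) (g : Fin m2 → Fin n2) (h : Fin m3 → Fin n3) :
    IsSumOfSimple r fun i j k => X (f i) (g j) (h k) := by
  obtain ⟨a, b, c, hX⟩ := hX
  exact ⟨fun l i => a l (f i), fun l j => b l (g j), fun l k => c l (h k),
    fun i j k => hX (f i) (g j) (h k)⟩

theorem swap (hX : IsSumOfSimple r X) : IsSumOfSimple r fun j i k => X i j k := by
  obtain ⟨a, b, c, hX⟩ := hX
  refine ⟨b, a, c, fun j i k => ?_⟩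
  show X i j k = _
  rw [hX]
  exact Finset.sum_congr rfl fun l _ => by ring

theorem add (hX : IsSumOfSimple r X) (hY : IsSumOfSimple s Y) :
    IsSumOfSimple (r + s) (X + Y) := by
  obtain ⟨a, b, c, hX⟩ := hX
  obtain ⟨a', b', c', hY⟩ := hY
  refine ⟨Fin.append a a', Fin.append b b', Fin.append c c', fun i j k => ?_⟩
  simp [Fin.sum_univ_add, hX, hY]

theorem of_slice_zero_succ {K : ℕ} {X : Fin n1 → Fin n2 → Fin (K + 1) → F}
    (h₀ : IsSumOfSimple r fun i j (_ : Fin 1) => X i j 0)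
    (hsucc : IsSumOfSimple s fun i j k => X i j k.succ) :
    IsSumOfSimple (r + s) X := by
  obtain ⟨a, b, c, h₀⟩ := h₀
  obtain ⟨a', b', c', hsucc⟩ := hsucc
  simp only at h₀ hsucc
  have hsplit : X = (fun i j k => Fin.cases (X i j 0) 0 k) +
      fun i j k => Fin.cases 0 (X i j ·.succ) k := by
    funext i j k; cases k using Fin.cases <;> simp
  rw [hsplit]
  refine add ⟨a, b, fun l k => Fin.cases (c l 0) 0 k, fun i j k => ?_⟩
    ⟨a', b', fun l k => Fin.cases 0 (c' l) k, fun i j k => ?_⟩ <;>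
  cases k using Fin.cases <;> simp [h₀ i j 0, hsucc]

theorem of_rows_eq_zero {M : Fin n1 → Fin n2 → F} (hr : r ≤ n1)
    (hM : ∀ (i : Fin n1) j, r ≤ (i : ℕ) → M i j = 0) :
    IsSumOfSimple r fun i j (_ : Fin 1) => M i j := by
  refine ⟨fun l i => if (i : ℕ) = l then 1 else 0, fun l => M (Fin.castLE hr l), fun _ _ => 1,
    fun i j _ => ?_⟩
  by_cases hi : (i : ℕ) < r
  · rw [Fintype.sum_eq_single ⟨i, hi⟩ fun l hl => by
    simp [show (i : ℕ) ≠ l from fun h => hl (Fin.ext h.symm)]]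
    simp
  · simp only
    rw [hM i j (not_lt.mp hi)]
    exact (Finset.sum_eq_zero fun l _ => by simp [show (i : ℕ) ≠ l by omega]).symm

theorem exists_sub_smul (hX : IsSumOfSimple r X) {i₀ : Fin n1} (h₀ : X i₀ ≠ 0) :
    ∃ μ : Fin n1 → F, IsSumOfSimple (r - 1) fun i => X i - μ i • X i₀ := by
  obtain ⟨a, b, c, hX⟩ := hX
  obtain ⟨l₀, hl₀⟩ : ∃ l, a l i₀ ≠ 0 := by
    by_contra! ha
    exact h₀ (funext₂ fun j k => by simp [hX, ha])
  obtain ⟨r, rfl⟩ : ∃ r', r = r' + 1 := ⟨r - 1, by have := l₀.pos; omega⟩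
  set μ : Fin n1 → F := fun i => a l₀ i / a l₀ i₀
  have hμ : ∀ i, a l₀ i - μ i * a l₀ i₀ = 0 := fun i => by simp [μ, hl₀]
  refine ⟨μ, fun l i => a (l₀.succAbove l) i - μ i * a (l₀.succAbove l) i₀,
    fun l => b (l₀.succAbove l), fun l => c (l₀.succAbove l), fun i j k => ?_⟩
  have hexp : X i j k - μ i * X i₀ j k = ∑ l, (a l i - μ i * a l i₀) * b l j * c l k := by
    rw [hX, hX, Finset.mul_sum, ← Finset.sum_sub_distrib]
    exact Finset.sum_congr rfl fun l _ => by ring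
  simpa [Fin.sum_univ_succAbove _ l₀, hμ] using hexp

theorem exists_sub_mem_span {m : ℕ} (hX : IsSumOfSimple r X) (e : Fin m → Fin n1)
    (he : LinearIndependent F fun c => X (e c)) :
    ∃ Y : Fin n1 → Fin n2 → Fin n3 → F, IsSumOfSimple (r - m) Y ∧
      ∀ i, X i - Y i ∈ span F (range fun c => X (e c)) := by
  induction m with
  | zero => exact ⟨X, hX, fun i => by simp⟩
  | succ m ih =>
    obtain ⟨Y, hY, hXY⟩ := ih (e ∘ Fin.castSucc) (he.comp _ (Fin.castSucc_injective m))
    have hspan : span F (range fun c => X (e (Fin.castSucc c))) ≤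
        span F (range fun c => X (e c)) :=
      span_mono (range_comp_subset_range Fin.castSucc fun c => X (e c))
    have hlast : Y (e (Fin.last m)) ≠ 0 := by
      intro h
      have hmem := hXY (e (Fin.last m))
      rw [h, sub_zero] at hmem
      have := he.notMem_span_image (s := range Fin.castSucc) (x := Fin.last m) (by simp)
      rw [← range_comp] at this
      exact this hmem
    obtain ⟨μ, hμ⟩ := hY.exists_sub_smul hlast
    refine ⟨_, hμ, fun i => ?_⟩
    have hYlast : Y (e (Fin.last m)) ∈ span F (range fun c => X (e c)) := by
      rw [← sub_sub_cancel (X (e (Fin.last m))) (Y (e (Fin.last m)))]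
      exact sub_mem (subset_span (mem_range_self _)) (hspan (hXY _))
    rw [sub_sub_eq_add_sub, add_sub_right_comm]
    exact add_mem (hspan (hXY i)) (smul_mem _ _ hYlast)

theorem of_extend_zero {m1 m2 m3 : ℕ} {Y : Fin m1 → Fin m2 → Fin m3 → F}
    (hY : IsSumOfSimple r Y)
    {f : Fin m1 → Fin n1} {g : Fin m2 → Fin n2} {h : Fin m3 → Fin n3}
    (hf : f.Injective) (hg : g.Injective) (hh : h.Injective)
    (hXY : ∀ a b c, X (f a) (g b) (h c) = Y a b c)
    (hX : ∀ i j k, X i j k ≠ 0 → i ∈ range f ∧ j ∈ range g ∧ k ∈ range h) :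
    IsSumOfSimple r X := by
  obtain ⟨a, b, c, hY⟩ := hY
  refine ⟨fun l => Function.extend f (a l) 0, fun l => Function.extend g (b l) 0,
    fun l => Function.extend h (c l) 0, fun i j k => ?_⟩
  by_cases hijk : i ∈ range f ∧ j ∈ range g ∧ k ∈ range h
  · obtain ⟨⟨i, rfl⟩, ⟨j, rfl⟩, ⟨k, rfl⟩⟩ := hijk
    simp [hXY, hY, hf.extend_apply, hg.extend_apply, hh.extend_apply]
  · rw [not_imp_comm.mp (hX i j k) hijk, eq_comm]
    refine Finset.sum_eq_zero fun l _ => ?_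
    simp only [mem_range, not_and_or] at hijk
    rcases hijk with hi | hj | hk
    · simp [Function.extend_apply' _ _ _ hi]
    · simp [Function.extend_apply' _ _ _ hj]
    · simp [Function.extend_apply' _ _ _ hk]

end IsSumOfSimple

end SumOfSimple

-- For `n = 1`, slice `0` is the single entry `(0, 0)`: the recursion ends there.
def towerSupport : ℕ → ℕ → ℕ → ℕ → Prop
  | n, i, j, 0 => (n = 1 ∧ i = 0 ∧ j = 0) ∨ (i / 2 = j / 2 ∧ i ≠ j ∧ i / 2 < n / 2)
  | n, i, j, k + 1 => Even i ∧ Even j ∧ towerSupport (n / 2) (i / 2) (j / 2) k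

namespace towerSupport

theorem lt {n i j k : ℕ} (h : towerSupport n i j k) : i < n ∧ j < n := by
  induction k generalizing n i j with
  | zero => simp only [towerSupport] at h; omega
  | succ k ih =>
    obtain ⟨-, -, h⟩ := h
    have := ih h
    omega

theorem comm {n i j k : ℕ} : towerSupport n i j k ↔ towerSupport n j i k := by
  induction k generalizing n i j with
  | zero => simp only [towerSupport]; omega
  | succ k ih => simp only [towerSupport, ih]; tauto

theorem zero_odd_even {n c c' : ℕ} (hn : 2 ≤ n) (hc : c < n / 2) :
    towerSupport n (2 * c + 1) (2 * c') 0 ↔ c = c' := by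
  simp only [towerSupport]; omega

theorem not_zero_odd_odd {n c c' : ℕ} : ¬ towerSupport n (2 * c + 1) (2 * c' + 1) 0 := by
  simp only [towerSupport]; omega

theorem even_of_succ {n i j k : ℕ} (h : towerSupport n i j (k + 1)) : Even i ∧ Even j :=
  ⟨h.1, h.2.1⟩

theorem succ_even_even {n a b k : ℕ} :
    towerSupport n (2 * a) (2 * b) (k + 1) ↔ towerSupport (n / 2) a b k := by
  simp [towerSupport]

end towerSupport

open scoped Classical in
noncomputable def towerTensor (F : Type*) [Field F] (n : ℕ) :
    Fin n → Fin n → Fin (Nat.log 2 n + 1) → F :=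
  fun i j k => if towerSupport n i j k then 1 else 0

def evenIdx (n : ℕ) (a : Fin (n / 2)) : Fin n := ⟨2 * a, by omega⟩

def oddIdx (n : ℕ) (c : Fin (n / 2)) : Fin n := ⟨2 * c + 1, by omega⟩

theorem evenIdx_injective (n : ℕ) : (evenIdx n).Injective :=
  fun a b h => Fin.ext (by simpa [evenIdx] using h)

def towerRank (n : ℕ) : ℕ := 2 * n - 2 * (Nat.digits 2 n).sum + 1

theorem towerRank_one : towerRank 1 = 1 := by simp [towerRank]

theorem towerRank_of_two_le {n : ℕ} (hn : 2 ≤ n) :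
    towerRank n = 2 * (n / 2) + towerRank (n / 2) := by
  have hdigits := Nat.digits_def' one_lt_two (show 0 < n by omega)
  have hle := Nat.digit_sum_le 2 (n / 2)
  simp only [towerRank, hdigits, List.sum_cons]
  omega

section towerTensor

variable {F : Type*} [Field F] {n r : ℕ}

theorem towerTensor_comm (i j : Fin n) (k : Fin (Nat.log 2 n + 1)) :
    towerTensor F n i j k = towerTensor F n j i k := by
  simp only [towerTensor]
  classical
  exact if_congr towerSupport.comm rfl rfl

theorem towerTensor_oddIdx_evenIdx_zero (hn : 2 ≤ n) (c c' : Fin (n / 2)) :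
    towerTensor F n (oddIdx n c) (evenIdx n c') 0 = (Pi.single c 1 : Fin (n / 2) → F) c' := by
  simp [towerTensor, oddIdx, evenIdx, towerSupport.zero_odd_even hn c.isLt, Pi.single_apply,
    Fin.ext_iff, eq_comm]

theorem towerTensor_oddIdx_oddIdx_zero (c c' : Fin (n / 2)) :
    towerTensor F n (oddIdx n c) (oddIdx n c') 0 = 0 := by
  simp [towerTensor, oddIdx, towerSupport.not_zero_odd_odd]

theorem towerTensor_oddIdx_succ (c : Fin (n / 2)) (j : Fin n) (k : Fin (Nat.log 2 n)) :
    towerTensor F n (oddIdx n c) j k.succ = 0 := by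
  have hodd : ¬ Even (2 * (c : ℕ) + 1) := by simp
  simp only [towerTensor, Fin.val_succ, ite_eq_right_iff, one_ne_zero, imp_false]
  exact fun h => hodd h.even_of_succ.1

theorem towerTensor_succ_oddIdx (i : Fin n) (c : Fin (n / 2)) (k : Fin (Nat.log 2 n)) :
    towerTensor F n i (oddIdx n c) k.succ = 0 := by
  rw [towerTensor_comm]
  exact towerTensor_oddIdx_succ c i k

theorem towerTensor_evenIdx_evenIdx_succ (hn : 2 ≤ n) (a b : Fin (n / 2))
    (k : Fin (Nat.log 2 (n / 2) + 1)) :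
    towerTensor F n (evenIdx n a) (evenIdx n b)
      (Fin.cast (Nat.log_of_one_lt_of_le one_lt_two hn).symm k).succ =
      towerTensor F (n / 2) a b k := by
  simp only [towerTensor, evenIdx, Fin.val_succ, Fin.val_cast]
  classical
  exact if_congr towerSupport.succ_even_even rfl rfl

theorem mem_range_evenIdx_of_towerTensor_succ_ne_zero {i j : Fin n} {k : Fin (Nat.log 2 n)}
    (h : towerTensor F n i j k.succ ≠ 0) : i ∈ range (evenIdx n) ∧ j ∈ range (evenIdx n) := by
  have hsupp : towerSupport n i j (k + 1) := by
    by_contra hk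
    simp [towerTensor, hk] at h
  obtain ⟨⟨a, ha⟩, ⟨b, hb⟩, hhalf⟩ := hsupp
  have hlt := hhalf.lt
  exact ⟨⟨⟨i / 2, hlt.1⟩, Fin.ext (by simp [evenIdx]; omega)⟩,
    ⟨⟨j / 2, hlt.2⟩, Fin.ext (by simp [evenIdx]; omega)⟩⟩

theorem isSumOfSimple_towerTensor (hn : 1 ≤ n) :
    IsSumOfSimple (towerRank n) (towerTensor F n) := by
  induction n using Nat.strong_induction_on with
  | _ n ih =>
  obtain rfl | hn := hn.eq_or_lt
  · refine ⟨fun _ _ => 1, fun _ _ => 1, fun _ _ => 1, fun i j k => ?_⟩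
    have hk : (k : ℕ) = 0 := by simpa using k.isLt
    simp [towerTensor, towerSupport, hk, towerRank_one]
  have hlog := Nat.log_of_one_lt_of_le one_lt_two hn
  rw [towerRank_of_two_le hn]
  refine .of_slice_zero_succ (.of_rows_eq_zero (by omega) fun i j hi => ?_)
    ((ih (n / 2) (by omega) (by omega)).of_extend_zero (evenIdx_injective n)
      (evenIdx_injective n) (Fin.cast_injective hlog.symm)
      (towerTensor_evenIdx_evenIdx_succ hn) fun i j k h => ?_)
  · refine if_neg ?_
    simp only [Fin.val_zero, towerSupport]
    omega
  · obtain ⟨hi, hj⟩ := mem_range_evenIdx_of_towerTensor_succ_ne_zero h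
    exact ⟨hi, hj, Fin.cast hlog k, by simp⟩

theorem IsSumOfSimple.towerTensor_half (hn : 2 ≤ n) (hX : IsSumOfSimple r (towerTensor F n)) :
    IsSumOfSimple (r - 2 * (n / 2)) (towerTensor F (n / 2)) := by
  have hlog := Nat.log_of_one_lt_of_le one_lt_two hn
  obtain ⟨Y, hY, hXY⟩ := hX.exists_sub_mem_span (oddIdx n)
    (linearIndependent_of_apply_eq_single (evenIdx n) 0 (towerTensor_oddIdx_evenIdx_zero hn))
  have hYX i j k (h : ∀ c, towerTensor F n (oddIdx n c) j k = 0) :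
      Y i j k = towerTensor F n i j k :=
    (apply_eq_of_sub_mem_span h (hXY i)).symm
  have hind : LinearIndependent F fun c (a : Fin (n / 2)) k => Y (evenIdx n a) (oddIdx n c) k :=
    linearIndependent_of_apply_eq_single id 0 fun c a => by
      rw [id, hYX _ _ _ fun c' => towerTensor_oddIdx_oddIdx_zero c' c, towerTensor_comm]
      exact towerTensor_oddIdx_evenIdx_zero hn c a
  have hY_succ_odd (a c : Fin (n / 2)) (k : Fin (Nat.log 2 n)) :
      Y (evenIdx n a) (oddIdx n c) k.succ = 0 :=
    (hYX _ _ _ fun c' => towerTensor_oddIdx_succ c' _ _).trans (towerTensor_succ_oddIdx _ c _)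
  obtain ⟨Z, hZ, hYZ⟩ := (hY.comp (evenIdx n) id id).swap.exists_sub_mem_span (oddIdx n) hind
  rw [two_mul, ← Nat.sub_sub]
  convert (hZ.comp (evenIdx n) id fun k => (Fin.cast hlog.symm k).succ).swap using 1
  funext a b k
  symm
  calc Z (evenIdx n b) a (Fin.cast hlog.symm k).succ
      = Y (evenIdx n a) (evenIdx n b) (Fin.cast hlog.symm k).succ :=
        (apply_eq_of_sub_mem_span (fun c => hY_succ_odd a c _) (hYZ (evenIdx n b))).symm
    _ = towerTensor F n (evenIdx n a) (evenIdx n b) (Fin.cast hlog.symm k).succ :=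
        hYX _ _ _ fun c => towerTensor_oddIdx_succ c _ _
    _ = towerTensor F (n / 2) a b k := towerTensor_evenIdx_evenIdx_succ hn a b k

theorem towerRank_le_of_isSumOfSimple (hn : 1 ≤ n) (hX : IsSumOfSimple r (towerTensor F n)) :
    towerRank n ≤ r := by
  induction n using Nat.strong_induction_on generalizing r with
  | _ n ih =>
  obtain rfl | hn := hn.eq_or_lt
  · obtain ⟨a, b, c, hX⟩ := hX
    rw [towerRank_one, Nat.one_le_iff_ne_zero]
    rintro rfl
    simpa [towerTensor, towerSupport] using hX 0 0 0
  have hhalf := ih (n / 2) (by omega) (by omega) (hX.towerTensor_half hn)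
  have hpos : 1 ≤ towerRank (n / 2) := Nat.le_add_left 1 _
  rw [towerRank_of_two_le hn]
  omega

end towerTensor

theorem rank3_eq_of_isSumOfSimple {F : Type*} [Field F] {n1 n2 n3 r : ℕ}
    {T : Fin n1 → Fin n2 → Fin n3 → F} (hT : IsSumOfSimple r T)
    (hmin : ∀ s, IsSumOfSimple s T → r ≤ s) : rank3 T = r :=
  le_antisymm (Nat.sInf_le hT) (le_csInf ⟨r, hT⟩ hmin)

/-- For every field `F` and every `n ≥ 1` there is a 0/1-valued tensor of size
`[n] × [n] × [⌊lg n⌋ + 1]` whose rank over `F` is exactly `2n - 2H(n) + 1`,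
where `H(n)` is the number of 1s in the binary expansion of `n`. -/
theorem stmt0 (F : Type*) [Field F] (n : ℕ) (hn : 1 ≤ n) :
    ∃ T : Fin n → Fin n → Fin (Nat.log 2 n + 1) → F,
      (∀ i j k, T i j k = 0 ∨ T i j k = 1) ∧
      rank3 T = 2 * n - 2 * (Nat.digits 2 n).sum + 1 := by
  refine ⟨towerTensor F n, fun i j k => ?_, ?_⟩
  · unfold towerTensor
    split_ifs <;> simp
  · exact rank3_eq_of_isSumOfSimple (isSumOfSimple_towerTensor hn)
      fun _ => towerRank_le_of_isSumOfSimple hn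
end

section
/- Let F be a field, n, k ≥ 1, and let A_1,…,A_k be n × n matrices over F. Let I_n denote the n × n identity matrix. Consider the order-3 tensor of size [2n] × [2n] × [k+1] whose first layer along the third axis is the 2n × 2n block matrix [[I_n, 0],[0, I_n]] and whose (l+1)-st layer, for l = 1,…,k, is the 2n × 2n block matrix [[0, 0],[A_l, 0]] (with A_l in the bottom-left n × n block). Then the rank of this tensor is at least rank([A_1|⋯|A_k]) + 2n, where [A_1|⋯|A_k] denotes the order-3 tensor of size [n] × [n] × [k] whose l-th layer along the third axis is A_l. -/
/-!
Substitution method. Given a decomposition of `T` into `r` simple tensors and a nonzero slice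
`T i₀`, some simple term has a first factor that does not vanish at `i₀`; subtracting suitable
multiples of `T i₀` from the other slices kills that term, so the other slices, corrected by
multiples of `T i₀`, form a tensor of rank at most `r - 1`.

The `n` upper rows of the block tensor are unit slices supported on the left columns of the
first layer, so eliminating them changes the lower rows only there. In what remains, the `n`
right columns are again unit slices supported in the first layer; eliminating them only changes
the first layer, and dropping it leaves `[A₁|⋯|A_k]`, written with at most `r - 2n` simple
tensors.
-/

open Finset Submodule

section

variable {F : Type*} [Field F]

def HasDecomp {ι₁ ι₂ ι₃ : Type*} (ρ : Type*) [Fintype ρ] (T : ι₁ → ι₂ → ι₃ → F) : Prop :=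
  ∃ (a : ρ → ι₁ → F) (b : ρ → ι₂ → F) (c : ρ → ι₃ → F),
    ∀ i j k, T i j k = ∑ p, a p i * b p j * c p k

namespace HasDecomp

variable {ι₁ ι₂ ι₃ : Type*} {ρ : Type*} [Fintype ρ] {T : ι₁ → ι₂ → ι₃ → F}

theorem comp {κ₁ κ₂ κ₃ : Type*} (h : HasDecomp ρ T) (f : κ₁ → ι₁) (g : κ₂ → ι₂) (e : κ₃ → ι₃) :
    HasDecomp ρ fun i j k => T (f i) (g j) (e k) := by
  obtain ⟨a, b, c, h⟩ := h
  exact ⟨fun p i => a p (f i), fun p j => b p (g j), fun p k => c p (e k), fun i j k => h _ _ _⟩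

theorem flip (h : HasDecomp ρ T) : HasDecomp ρ fun j i k => T i j k := by
  obtain ⟨a, b, c, h⟩ := h
  exact ⟨b, a, c, fun j i k => (h i j k).trans (sum_congr rfl fun p _ => by ring)⟩

theorem reindex {ρ' : Type*} [Fintype ρ'] (e : ρ' ≃ ρ) (h : HasDecomp ρ T) : HasDecomp ρ' T := by
  obtain ⟨a, b, c, h⟩ := h
  exact ⟨fun p => a (e p), fun p => b (e p), fun p => c (e p),
    fun i j k => (h i j k).trans (e.sum_comp fun p => a p i * b p j * c p k).symm⟩

theorem of_fintype [Fintype ι₁] [DecidableEq ι₁] [Fintype ι₂] [DecidableEq ι₂]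
    (T : ι₁ → ι₂ → ι₃ → F) : HasDecomp (ι₁ × ι₂) T :=
  ⟨fun p i => if i = p.1 then 1 else 0, fun p j => if j = p.2 then 1 else 0,
    fun p k => T p.1 p.2 k, fun i j k => by simp [Fintype.sum_prod_type]⟩

theorem exists_sub_smul {β J K : Type*} {r : ℕ} {T : Option β → J → K → F}
    (hT : HasDecomp (Fin r) T) {j₀ : J} {k₀ : K} (h₀ : T none j₀ k₀ ≠ 0) :
    ∃ r', r' + 1 = r ∧ ∃ c : β → F, HasDecomp (Fin r') fun x => T (some x) - c x • T none := by
  obtain ⟨a, b, c, h⟩ := hT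
  obtain ⟨p₀, hp₀⟩ : ∃ p, a p none ≠ 0 := by
    by_contra! hc
    exact h₀ (by simp [h, hc])
  obtain ⟨r', rfl⟩ : ∃ r', r = r' + 1 := ⟨r - 1, by have := p₀.pos; omega⟩
  set d : β → F := fun x => a p₀ (some x) / a p₀ none
  refine ⟨r', rfl, d, fun q x => a (p₀.succAbove q) (some x) - d x * a (p₀.succAbove q) none,
    fun q => b (p₀.succAbove q), fun q => c (p₀.succAbove q), fun x j k => ?_⟩
  have hcancel : a p₀ (some x) - d x * a p₀ none = 0 := by simp [d, div_mul_cancel₀ _ hp₀]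
  simp only [Pi.sub_apply, Pi.smul_apply, smul_eq_mul, h, Fin.sum_univ_succAbove _ p₀, mul_add,
    mul_sum]
  simp only [sub_mul, sum_sub_distrib, mul_assoc]
  linear_combination (b p₀ j * c p₀ k) * hcancel

theorem exists_sub_mem_span {σ J K : Type*} {m r : ℕ} {T : Fin m ⊕ σ → J → K → F}
    (hT : HasDecomp (Fin r) T) (p : Fin m → J) (q : Fin m → K)
    (hpq : ∀ t t', T (.inl t) (p t') (q t') = if t = t' then 1 else 0) :
    ∃ r', r' + m = r ∧ ∃ T' : σ → J → K → F, HasDecomp (Fin r') T' ∧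
      ∀ s, T' s - T (.inr s) ∈ span F (Set.range fun t => T (.inl t)) := by
  induction m generalizing r with
  | zero => exact ⟨r, rfl, fun s => T (.inr s), hT.comp .inr id id, fun s => by simp⟩
  | succ m ih =>
    let f : Option (Fin m ⊕ σ) → Fin (m + 1) ⊕ σ := fun o => o.elim (.inl 0) (Sum.map Fin.succ id)
    obtain ⟨r₁, hr₁, c, hT₁⟩ := (hT.comp f id id).exists_sub_smul (j₀ := p 0) (k₀ := q 0)
      (by simp [f, hpq])
    set T₁ : Fin m ⊕ σ → J → K → F := fun x => T (Sum.map Fin.succ id x) - c x • T (.inl 0)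
    have hpq₁ : ∀ t t', T₁ (.inl t) (p t'.succ) (q t'.succ) = if t = t' then 1 else 0 := by
      intro t t'
      simp [T₁, hpq, (Fin.succ_ne_zero t').symm]
    obtain ⟨r', hr', T', hT', hspan⟩ := ih hT₁ _ _ hpq₁
    refine ⟨r', by omega, T', hT', fun s => ?_⟩
    have hsub :
        span F (Set.range fun t => T₁ (.inl t)) ≤ span F (Set.range fun t => T (.inl t)) := by
      refine span_le.mpr ?_
      rintro _ ⟨t, rfl⟩
      exact sub_mem (subset_span ⟨t.succ, rfl⟩) (smul_mem _ _ (subset_span ⟨0, rfl⟩))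
    have hs : T' s - T (.inr s) = (T' s - T₁ (.inr s)) - c (.inr s) • T (.inl 0) := by
      simp only [T₁, Sum.map_inr, id]
      abel
    rw [hs]
    exact sub_mem (hsub (hspan s)) (smul_mem _ _ (subset_span ⟨0, rfl⟩))

end HasDecomp

theorem apply_eq_of_sub_mem_span_s2 {ι J K : Type*} {v w : J → K → F} {g : ι → J → K → F}
    (h : v - w ∈ span F (Set.range g)) {j : J} {k : K} (hg : ∀ t, g t j k = 0) :
    v j k = w j k := by
  have hker : span F (Set.range g) ≤
      LinearMap.ker ((LinearMap.proj k).comp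
        (LinearMap.proj (R := F) (φ := fun _ : J => K → F) j)) :=
    span_le.mpr (by rintro _ ⟨t, rfl⟩; simp [hg])
  simpa [sub_eq_zero] using hker h

theorem rank3_le_of_hasDecomp {n₁ n₂ n₃ r : ℕ} {T : Fin n₁ → Fin n₂ → Fin n₃ → F}
    (h : HasDecomp (Fin r) T) : rank3 T ≤ r :=
  Nat.sInf_le h

theorem hasDecomp_rank3 {n₁ n₂ n₃ : ℕ} (T : Fin n₁ → Fin n₂ → Fin n₃ → F) :
    HasDecomp (Fin (rank3 T)) T :=
  Nat.sInf_mem (s := {r | HasDecomp (Fin r) T})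
    ⟨n₁ * n₂, (HasDecomp.of_fintype T).reindex finProdFinEquiv.symm⟩

section blockTensor

variable {n k : ℕ} (A : Fin k → Matrix (Fin n) (Fin n) F)

/-- The tensor of the theorem, with rows and columns indexed by the two blocks `Fin n ⊕ Fin n`. -/
def blockTensor : Fin n ⊕ Fin n → Fin n ⊕ Fin n → Fin (k + 1) → F := fun x y =>
  Fin.cases (if x = y then 1 else 0) fun l =>
    match x, y with
    | .inr a, .inl b => A l a b
    | _, _ => 0

@[simp] theorem blockTensor_zero (x y : Fin n ⊕ Fin n) :
    blockTensor A x y 0 = if x = y then 1 else 0 := rfl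

@[simp] theorem blockTensor_inr_inl_succ (a b : Fin n) (l : Fin k) :
    blockTensor A (.inr a) (.inl b) l.succ = A l a b := rfl

@[simp] theorem blockTensor_inl_succ (a : Fin n) (y : Fin n ⊕ Fin n) (l : Fin k) :
    blockTensor A (.inl a) y l.succ = 0 := by
  cases y <;> rfl

@[simp] theorem blockTensor_inr_inr_succ (a b : Fin n) (l : Fin k) :
    blockTensor A (.inr a) (.inr b) l.succ = 0 := rfl

theorem rank3_add_two_mul_le {r : ℕ} (hB : HasDecomp (Fin r) (blockTensor A)) :
    rank3 (fun (i j : Fin n) (l : Fin k) => A l i j) + 2 * n ≤ r := by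
  obtain ⟨r₁, hr₁, T₁, hT₁, hspan₁⟩ :=
    hB.exists_sub_mem_span (σ := Fin n) .inl (fun _ => 0) (by simp)
  have hT₁_right : ∀ a b l, T₁ a (.inr b) l = blockTensor A (.inr a) (.inr b) l := fun a b l =>
    apply_eq_of_sub_mem_span_s2 (hspan₁ a) fun t => by cases l using Fin.cases <;> simp
  have hT₁_succ : ∀ a b l, T₁ a (.inl b) l.succ = A l a b := fun a b l =>
    apply_eq_of_sub_mem_span_s2 (hspan₁ a) fun t => by simp
  obtain ⟨r₂, hr₂, T₂, hT₂, hspan₂⟩ :=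
    (hT₁.flip.comp Sum.swap id id).exists_sub_mem_span id (fun _ => 0)
      (by simp [hT₁_right, eq_comm])
  have hA : HasDecomp (Fin r₂) fun (i j : Fin n) (l : Fin k) => A l i j := by
    convert hT₂.flip.comp id id Fin.succ using 1
    funext a b l
    rw [← hT₁_succ]
    exact (apply_eq_of_sub_mem_span_s2 (hspan₂ b) fun t =>
      (hT₁_right a t _).trans (blockTensor_inr_inr_succ A a t l)).symm
  have := rank3_le_of_hasDecomp hA
  omega

end blockTensor

end

/-- Let `A₁, …, A_k` be `n × n` matrices over `F`.  The `[2n] × [2n] × [k+1]` tensor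
whose first layer is the block matrix `[[Iₙ, 0], [0, Iₙ]]` and whose `(l+1)`-st layer is
`[[0, 0], [A_l, 0]]` has rank at least `rank([A₁|⋯|A_k]) + 2n`. -/
theorem stmt2 (F : Type*) [Field F] (n k : ℕ)
    (A : Fin k → Matrix (Fin n) (Fin n) F) :
    rank3 (fun (i j : Fin n) (l : Fin k) => A l i j) + 2 * n ≤
      rank3 (fun (i j : Fin (2 * n)) (l : Fin (k + 1)) =>
        if hl : l = 0 then (if i = j then (1 : F) else 0)
        else if h : n ≤ (i : ℕ) ∧ (j : ℕ) < n then
          A (l.pred hl) ⟨(i : ℕ) - n, by have := i.isLt; omega⟩ ⟨(j : ℕ), h.2⟩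
        else 0) := by
  let e : Fin n ⊕ Fin n ≃ Fin (2 * n) := finSumFinEquiv.trans (finCongr (two_mul n).symm)
  apply rank3_add_two_mul_le A
  convert (hasDecomp_rank3 _).comp e e id using 1
  funext x y l
  cases l using Fin.cases <;> rcases x with a | a <;> rcases y with b | b <;>
    simp only [e, Equiv.trans_apply, finSumFinEquiv_apply_left, finSumFinEquiv_apply_right,
      finCongr_apply, id] <;> simp [Fin.ext_iff] <;> omega
end

section
/- (Layer reduction.) Let F be a field, d ≥ 2, and let S_1,…,S_{n_d} : [n_1] × ⋯ × [n_{d−1}] → F be tensors with S_{n_d} nonzero. Then there exist constants c_1,…,c_{n_d−1} ∈ F such that rank_F([S_1|⋯|S_{n_d}]) ≥ rank_F([S_1 + c_1 S_{n_d}|⋯|S_{n_d−1} + c_{n_d−1} S_{n_d}]) + 1. -/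
/-!
Take a decomposition of `[S₀ | ⋯ | Sₘ]` into `r = rank` simple tensors `vₖ ⊗ wₖ`. Since `Sₘ ≠ 0`,
some term `k₀` has `wₖ₀(m) ≠ 0`. With `cₗ = -wₖ₀(l) / wₖ₀(m)`, adding `cₗ Sₘ` to the layer `Sₗ`
cancels the contribution of `vₖ₀` to it, so the reduced tensor is a sum of the other `r - 1`
simple tensors.
-/

/-- The tensor rank of an order-`(e+1)` tensor presented as `m` layers of an
order-`e` tensor of shape `[n 0] × ⋯ × [n (e-1)]`: the least `r` such that the
layered tensor is a sum of `r` simple tensors. -/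
noncomputable def layeredRank (F : Type*) [Field F] {e : ℕ} {n : Fin e → ℕ} {m : ℕ}
    (T : ((j : Fin e) → Fin (n j)) → Fin m → F) : ℕ :=
  sInf {r : ℕ | ∃ (v : Fin r → (j : Fin e) → Fin (n j) → F) (w : Fin r → Fin m → F),
    ∀ i l, T i l = ∑ kk, (∏ j, v kk j (i j)) * w kk l}

section LayeredRank

variable {F : Type*} [Field F] {e : ℕ} {n : Fin e → ℕ} {m : ℕ}

theorem layeredRank_le_of_eq_sum {T : ((j : Fin e) → Fin (n j)) → Fin m → F} {r : ℕ}
    (v : Fin r → (j : Fin e) → Fin (n j) → F) (w : Fin r → Fin m → F)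
    (hT : ∀ i l, T i l = ∑ k, (∏ j, v k j (i j)) * w k l) :
    layeredRank F T ≤ r :=
  Nat.sInf_le ⟨v, w, hT⟩

/-- The decomposition along the multi-index: one simple tensor `δᵢ ⊗ T(i, ·)` per entry `i`. -/
theorem exists_eq_sum_simple (T : ((j : Fin e) → Fin (n j)) → Fin m → F) :
    ∃ (r : ℕ) (v : Fin r → (j : Fin e) → Fin (n j) → F) (w : Fin r → Fin m → F),
      ∀ i l, T i l = ∑ k, (∏ j, v k j (i j)) * w k l := by
  classical
  let σ := Fintype.equivFin ((j : Fin e) → Fin (n j))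
  refine ⟨_, fun k j x => if σ.symm k j = x then 1 else 0, fun k l => T (σ.symm k) l,
    fun i l => ?_⟩
  rw [← σ.sum_comp, Fintype.sum_eq_single i fun a ha => ?_]
  · simp
  · have hne : ¬∀ j, a j = i j := fun h => ha (funext h)
    simp [Finset.prod_boole, hne]

theorem exists_eq_sum_layeredRank (T : ((j : Fin e) → Fin (n j)) → Fin m → F) :
    ∃ (v : Fin (layeredRank F T) → (j : Fin e) → Fin (n j) → F)
      (w : Fin (layeredRank F T) → Fin m → F),
      ∀ i l, T i l = ∑ k, (∏ j, v k j (i j)) * w k l := by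
  obtain ⟨r, hr⟩ := exists_eq_sum_simple T
  exact Nat.sInf_mem (s := {r | ∃ (v : Fin r → (j : Fin e) → Fin (n j) → F)
    (w : Fin r → Fin m → F), ∀ i l, T i l = ∑ k, (∏ j, v k j (i j)) * w k l}) ⟨r, hr⟩

theorem layeredRank_add_one_le_of_eq_sum {S : Fin (m + 1) → ((j : Fin e) → Fin (n j)) → F}
    {r : ℕ} (v : Fin r → (j : Fin e) → Fin (n j) → F) (w : Fin r → Fin (m + 1) → F)
    (hS : ∀ i l, S l i = ∑ k, (∏ j, v k j (i j)) * w k l)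
    (k₀ : Fin r) (hk₀ : w k₀ (Fin.last m) ≠ 0) :
    layeredRank F (fun i l => S l.castSucc i +
      -w k₀ l.castSucc / w k₀ (Fin.last m) * S (Fin.last m) i) + 1 ≤ r := by
  obtain ⟨r, rfl⟩ := Nat.exists_eq_add_one_of_ne_zero k₀.pos.ne'
  set c : Fin m → F := fun l => -w k₀ l.castSucc / w k₀ (Fin.last m)
  refine Nat.succ_le_succ (layeredRank_le_of_eq_sum (fun k => v (k₀.succAbove k))
    (fun k l => w (k₀.succAbove k) l.castSucc + c l * w (k₀.succAbove k) (Fin.last m))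
    fun i l => ?_)
  have hcancel : (∏ j, v k₀ j (i j)) * w k₀ l.castSucc +
      c l * ((∏ j, v k₀ j (i j)) * w k₀ (Fin.last m)) = 0 := by
    simp only [c]
    field_simp
    ring
  rw [hS i l.castSucc, hS i (Fin.last m), Finset.mul_sum,
    Fin.sum_univ_succAbove _ k₀, Fin.sum_univ_succAbove _ k₀, add_add_add_comm, hcancel,
    zero_add, ← Finset.sum_add_distrib]
  exact Finset.sum_congr rfl fun k _ => by ring

end LayeredRank

theorem stmt3_general (F : Type*) [Field F] (e : ℕ) (n : Fin e → ℕ) (m : ℕ)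
    (S : Fin (m + 1) → ((j : Fin e) → Fin (n j)) → F)
    (hS : S (Fin.last m) ≠ 0) :
    ∃ c : Fin m → F,
      layeredRank F (fun i l => S l.castSucc i + c l * S (Fin.last m) i) + 1 ≤
        layeredRank F (fun i l => S l i) := by
  obtain ⟨v, w, hvw⟩ := exists_eq_sum_layeredRank (F := F) fun i l => S l i
  obtain ⟨i₀, hi₀⟩ := Function.ne_iff.mp hS
  obtain ⟨k₀, -, hk₀⟩ := Finset.exists_ne_zero_of_sum_ne_zero (hvw i₀ (Fin.last m) ▸ hi₀)
  exact ⟨_, layeredRank_add_one_le_of_eq_sum v w hvw k₀ (right_ne_zero_of_mul hk₀)⟩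

/-- Layer reduction: if `S 0, …, S m` are the layers (along the last axis) of an
order-`(e+1)` tensor (`e ≥ 1`, so the order `d = e + 1` is at least 2) and the
last layer `S m` is nonzero, then there exist constants `c₁, …, c_m ∈ F` with
`rank [S₀ + c₀·Sₘ | ⋯ | S_{m-1} + c_{m-1}·Sₘ] + 1 ≤ rank [S₀ | ⋯ | Sₘ]`. -/
theorem stmt3 (F : Type*) [Field F] (e : ℕ) (he : 1 ≤ e) (n : Fin e → ℕ) (m : ℕ)
    (S : Fin (m + 1) → ((j : Fin e) → Fin (n j)) → F)
    (hS : S (Fin.last m) ≠ 0) :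
    ∃ c : Fin m → F,
      layeredRank F (fun i l => S l.castSucc i + c l * S (Fin.last m) i) + 1 ≤
        layeredRank F (fun i l => S l i) :=
  stmt3_general F e n m S hS
end

section
/- (Iterative layer reduction.) Let F be a field, d ≥ 2, 1 ≤ m ≤ n_d, and let S_1,…,S_{n_d} : [n_1] × ⋯ × [n_{d−1}] → F be tensors such that S_1,…,S_m are linearly independent as vectors in F^{n_1 ⋯ n_{d−1}}. Then there exist constants c_{i,j} ∈ F for i ∈ {1,…,m} and j ∈ {m+1,…,n_d} such that rank_F([S_1|⋯|S_{n_d}]) ≥ rank_F([S_{m+1} + Σ_{i=1}^m c_{i,m+1} S_i | ⋯ | S_{n_d} + Σ_{i=1}^m c_{i,n_d} S_i]) + m. -/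
open Finset Function Matrix

section LinearAlgebra

variable {F ι κ : Type*} [Field F] [Fintype ι] [Fintype κ]

theorem Matrix.exists_injective_linearIndependent_rows (W : Matrix ι κ F)
    (hW : LinearIndependent F Wᵀ) :
    ∃ K : κ → ι, Injective K ∧ LinearIndependent F (W.submatrix K id) := by
  have hspan : Submodule.span F (Set.range W.row) = ⊤ := by
    apply Submodule.eq_top_of_finrank_eq
    rw [Module.finrank_fintype_fun_eq_card, ← hW.rank_matrix (M := Wᵀ), rank_transpose,
      rank_eq_finrank_span_row]
  obtain ⟨κ', a, ha, ha_span, ha_li⟩ := exists_linearIndependent' F W.row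
  have : Fintype κ' := Fintype.ofInjective a ha
  let b : Module.Basis κ' F (κ → F) := .mk ha_li (by rw [ha_span, hspan])
  have e : κ ≃ κ' := Fintype.equivOfCardEq <| by
    rw [← Module.finrank_eq_card_basis b, Module.finrank_fintype_fun_eq_card]
  exact ⟨a ∘ e, ha.comp e.injective, ha_li.comp e e.injective⟩

theorem Matrix.exists_injective_add_sum_mul_eq_zero {π : Type*} (W : Matrix ι κ F)
    (hW : LinearIndependent F Wᵀ) (U : ι → π → F) :
    ∃ (K : κ → ι) (c : κ → π → F), Injective K ∧
      ∀ i l, U (K i) l + ∑ kk, c kk l * W (K i) kk = 0 := by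
  classical
  obtain ⟨K, hK, hrows⟩ := W.exists_injective_linearIndependent_rows hW
  have hM : IsUnit (W.submatrix K id) := linearIndependent_rows_iff_isUnit.mp hrows
  choose x hx using fun l => mulVec_surjective_iff_isUnit.mpr hM (fun i => -U (K i) l)
  refine ⟨K, fun kk l => x l kk, hK, fun i l => ?_⟩
  have hxi := congrFun (hx l) i
  simp only [mulVec, dotProduct, submatrix_apply, id] at hxi
  simp only [mul_comm (x l _), hxi, add_neg_cancel]

end LinearAlgebra

section LayeredRank

variable {F : Type*} [Field F] {e : ℕ} {n : Fin e → ℕ} {m : ℕ}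

def HasSimpleDecomposition (T : ((j : Fin e) → Fin (n j)) → Fin m → F) (ι : Type*) [Fintype ι] :
    Prop :=
  ∃ (v : ι → (j : Fin e) → Fin (n j) → F) (w : ι → Fin m → F),
    ∀ i l, T i l = ∑ k, (∏ j, v k j (i j)) * w k l

variable {T : ((j : Fin e) → Fin (n j)) → Fin m → F}

theorem HasSimpleDecomposition.fin_card {ι : Type*} [Fintype ι]
    (hT : HasSimpleDecomposition T ι) : HasSimpleDecomposition T (Fin (Fintype.card ι)) := by
  obtain ⟨v, w, hvw⟩ := hT
  let σ := (Fintype.equivFin ι).symm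
  exact ⟨v ∘ σ, w ∘ σ, fun i l => by rw [hvw, ← σ.sum_comp]; rfl⟩

theorem layeredRank_le_card {ι : Type*} [Fintype ι] (hT : HasSimpleDecomposition T ι) :
    layeredRank F T ≤ Fintype.card ι :=
  Nat.sInf_le hT.fin_card

theorem hasSimpleDecomposition_indices (T : ((j : Fin e) → Fin (n j)) → Fin m → F) :
    HasSimpleDecomposition T ((j : Fin e) → Fin (n j)) := by
  classical
  refine ⟨fun x j a => if x j = a then 1 else 0, fun x => T x, fun i l => ?_⟩
  simp only [Fintype.prod_boole, ← funext_iff, ite_mul, one_mul, zero_mul, sum_ite_eq', mem_univ,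
    if_true]

theorem hasSimpleDecomposition_layeredRank (T : ((j : Fin e) → Fin (n j)) → Fin m → F) :
    HasSimpleDecomposition T (Fin (layeredRank F T)) :=
  Nat.sInf_mem (s := {r | HasSimpleDecomposition T (Fin r)})
    ⟨_, (hasSimpleDecomposition_indices T).fin_card⟩

theorem layeredRank_add_card_le {ι κ : Type*} [Fintype ι] [Fintype κ]
    (v : ι → (j : Fin e) → Fin (n j) → F) (w : ι → Fin m → F)
    (hT : ∀ i l, T i l = ∑ k, (∏ j, v k j (i j)) * w k l)
    {K : κ → ι} (hK : Injective K) (hw : ∀ i, w (K i) = 0) :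
    layeredRank F T + Fintype.card κ ≤ Fintype.card ι := by
  classical
  have hrest : HasSimpleDecomposition T {k // ¬∃ a, K a = k} := by
    refine ⟨fun k => v k, fun k => w k, fun i l => ?_⟩
    rw [hT, ← Fintype.sum_subtype_add_sum_subtype (fun k => ∃ a, K a = k), add_eq_right]
    refine Fintype.sum_eq_zero _ fun ⟨_, a, ha⟩ => ?_
    simp only [← ha, hw, Pi.zero_apply, mul_zero]
  have hcard : Fintype.card {k // ¬∃ a, K a = k} = Fintype.card ι - Fintype.card κ := by
    rw [Fintype.card_subtype_compl,
      Fintype.card_congr (α := {k // ∃ a, K a = k}) (Equiv.ofInjective K hK).symm]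
  have := layeredRank_le_card hrest
  have := Fintype.card_le_of_injective K hK
  omega

end LayeredRank

theorem stmt4_general (F : Type*) [Field F] (e : ℕ) (n : Fin e → ℕ) (m p : ℕ)
    (S : Fin (m + p) → ((j : Fin e) → Fin (n j)) → F)
    (hS : LinearIndependent F (fun i : Fin m => S (Fin.castAdd p i))) :
    ∃ c : Fin m → Fin p → F,
      layeredRank F
          (fun i l => S (Fin.natAdd m l) i + ∑ kk : Fin m, c kk l * S (Fin.castAdd p kk) i)
        + m ≤ layeredRank F (fun i l => S l i) := by
  obtain ⟨v, w, hvw⟩ := hasSimpleDecomposition_layeredRank fun i l => S l i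
  let a : Fin _ → ((j : Fin e) → Fin (n j)) → F := fun k i => ∏ j, v k j (i j)
  have hlayers : ∀ l, S l = Fintype.linearCombination F a fun k => w k l := by
    intro l
    ext i
    simp only [hvw i l, mul_comm, Fintype.linearCombination_apply, Finset.sum_apply, Pi.smul_apply,
      smul_eq_mul, a]
  have hcols : LinearIndependent F (of fun k l => w k (Fin.castAdd p l))ᵀ :=
    .of_comp (Fintype.linearCombination F a) (by convert hS using 2; exact (hlayers _).symm)
  obtain ⟨K, c, hK, hc⟩ :=
    exists_injective_add_sum_mul_eq_zero _ hcols fun k l => w k (Fin.natAdd m l)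
  refine ⟨c, ?_⟩
  have hreduced : ∀ i l, S (Fin.natAdd m l) i + ∑ kk, c kk l * S (Fin.castAdd p kk) i =
      ∑ k, (∏ j, v k j (i j)) * (w k (Fin.natAdd m l) + ∑ kk, c kk l * w k (Fin.castAdd p kk)) := by
    intro i l
    simp only [hvw, mul_add, mul_sum, sum_add_distrib]
    rw [sum_comm]
    simp only [mul_left_comm]
  simpa only [Fintype.card_fin] using layeredRank_add_card_le v _ hreduced hK fun i => funext (hc i)

/-- Iterative layer reduction: for an order-`(e+1)` tensor (`e ≥ 1`, i.e. order
`d = e + 1 ≥ 2`) with layers `S 0, …, S (m+p-1)` along the last axis, where the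
first `m` layers (`1 ≤ m`) are linearly independent, there exist constants
`c : Fin m → Fin p → F` such that eliminating the first `m` layers drops
the rank by at least `m`. -/
theorem stmt4 (F : Type*) [Field F] (e : ℕ) (he : 1 ≤ e) (n : Fin e → ℕ) (m p : ℕ)
    (hm : 1 ≤ m)
    (S : Fin (m + p) → ((j : Fin e) → Fin (n j)) → F)
    (hS : LinearIndependent F (fun i : Fin m => S (Fin.castAdd p i))) :
    ∃ c : Fin m → Fin p → F,
      layeredRank F
          (fun i l => S (Fin.natAdd m l) i + ∑ kk : Fin m, c kk l * S (Fin.castAdd p kk) i)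
        + m ≤ layeredRank F (fun i l => S l i) :=
  stmt4_general F e n m p S hS
end

section
/- There is an absolute constant c > 0 such that for every finite field F there is an N so that for all n ≥ N there exists a permutation tensor T : [n]^3 → F with rank_F(T) ≥ c · n · (log n)/(log |F|). -/
/-!
A Latin square `L` of order `n` gives the permutation tensor `T i j k = [L i j = k]`, and distinct
Latin squares give distinct tensors. Latin squares are plentiful: the symbols still available in
the columns of a `k × n` Latin rectangle form an `(n - k)`-regular bipartite graph, so by
M. Hall's theorem on systems of distinct representatives the rectangle has at least `(n - k)!`
extensions by one row. Hence there are at least `∏ (n - i)! ≥ n ^ (n² / 64)` Latin squares. On the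
other hand a tensor of rank at most `r` is determined by `3 n r` field elements, so at most
`q ^ (3 n r)` tensors have rank at most `r`. Comparing the two counts, some Latin square tensor has
rank greater than `n log n / (256 log q)`.
-/

open Finset
open scoped Nat

/-- An order-3 permutation tensor: a 0/1-valued tensor `T : [n]³ → F` such that along
every axis, for every fixing of the other two coordinates, exactly one entry equals 1. -/
def IsPermutationTensor3 {F : Type*} [Field F] {n : ℕ}
    (T : Fin n → Fin n → Fin n → F) : Prop :=
  (∀ i j k, T i j k = 0 ∨ T i j k = 1) ∧
  (∀ j k, ∃! i, T i j k = 1) ∧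
  (∀ i k, ∃! j, T i j k = 1) ∧
  (∀ i j, ∃! k, T i j k = 1)

namespace Finset

variable {ι β : Type*} [DecidableEq β]

def HallCondition (s : Finset ι) (A : ι → Finset β) : Prop :=
  ∀ t ⊆ s, #t ≤ #(t.biUnion A)

def transversals [DecidableEq ι] (s : Finset ι) (A : ι → Finset β) : Finset (∀ i ∈ s, β) :=
  (s.pi A).filter fun f => ∀ i hi j hj, f i hi = f j hj → i = j

variable {s t : Finset ι} {A : ι → Finset β}

lemma HallCondition.erase_of_lt (hA : ∀ t ⊆ s, t.Nonempty → #t < #(t.biUnion A)) (x : β) :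
    HallCondition s fun i => (A i).erase x := by
  intro t hts
  obtain rfl | ht := t.eq_empty_or_nonempty
  · simp
  have hcover : t.biUnion A ⊆ insert x (t.biUnion fun i => (A i).erase x) := by
    intro y
    simp only [mem_biUnion, mem_insert, mem_erase]
    grind
  have := (hA t hts ht).trans_le ((card_le_card hcover).trans (card_insert_le _ _))
  omega

variable [DecidableEq ι]

lemma mem_transversals {f : ∀ i ∈ s, β} :
    f ∈ transversals s A ↔ (∀ i hi, f i hi ∈ A i) ∧ ∀ i hi j hj, f i hi = f j hj → i = j := by
  simp [transversals]

lemma HallCondition.transversals_nonempty (hA : HallCondition s A) :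
    (transversals s A).Nonempty := by
  have hall : ∀ u : Finset s, #u ≤ #(u.biUnion fun i => A i) := fun u => by
    simpa [card_image_of_injective _ Subtype.val_injective, image_biUnion] using
      hA (u.image Subtype.val) fun i hi => by obtain ⟨j, -, rfl⟩ := mem_image.mp hi; exact j.2
  obtain ⟨f, hf_inj, hf_mem⟩ :=
    (all_card_le_biUnion_card_iff_exists_injective fun i : s => A i).mp hall
  exact ⟨fun i hi => f ⟨i, hi⟩, mem_transversals.mpr
    ⟨fun i hi => hf_mem ⟨i, hi⟩, fun i hi j hj h => congrArg Subtype.val (hf_inj h)⟩⟩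

lemma HallCondition.sdiff_biUnion (hA : HallCondition s A) (hts : t ⊆ s)
    (htight : #(t.biUnion A) ≤ #t) :
    HallCondition (s \ t) fun i => A i \ t.biUnion A := by
  intro u hu
  have hdisj : Disjoint t u := disjoint_left.mpr fun i hit hiu => (mem_sdiff.mp (hu hiu)).2 hit
  have hcover : (t ∪ u).biUnion A ⊆ t.biUnion A ∪ u.biUnion fun i => A i \ t.biUnion A := by
    intro x
    simp only [mem_biUnion, mem_union, mem_sdiff]
    grind
  have := calc #t + #u = #(t ∪ u) := (card_union_of_disjoint hdisj).symm
    _ ≤ #((t ∪ u).biUnion A) := hA _ (union_subset hts (hu.trans sdiff_subset))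
    _ ≤ #(t.biUnion A) + #(u.biUnion fun i => A i \ t.biUnion A) :=
      (card_le_card hcover).trans (card_union_le _ _)
  omega

lemma card_transversals_le_of_tight (hA : HallCondition s A) (hts : t ⊆ s)
    (htight : #(t.biUnion A) ≤ #t) : #(transversals t A) ≤ #(transversals s A) := by
  obtain ⟨g, hg⟩ := (hA.sdiff_biUnion hts htight).transversals_nonempty
  rw [mem_transversals] at hg
  refine card_le_card_of_injOn
    (fun f i hi => if h : i ∈ t then f i h else g i (mem_sdiff.mpr ⟨hi, h⟩)) ?_ ?_
  · intro f hf
    rw [mem_coe, mem_transversals] at hf ⊢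
    dsimp only
    have hgA := fun i hi => mem_sdiff.mp (hg.1 i hi)
    have hft := fun i hi => mem_biUnion.mpr ⟨i, hi, hf.1 i hi⟩
    refine ⟨fun i hi => ?_, fun i hi j hj hij => ?_⟩
    · split_ifs with h
      exacts [hf.1 i h, (hgA i _).1]
    · split_ifs at hij with h₁ h₂ h₂
      exacts [hf.2 i h₁ j h₂ hij, ((hgA j _).2 (hij ▸ hft i h₁)).elim,
        ((hgA i _).2 (hij ▸ hft j h₂)).elim, hg.2 i _ j _ hij]
  · intro f₁ _ f₂ _ h
    funext i hi
    simpa [hi] using congr_fun₂ h i (hts hi)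

lemma sum_card_transversals_erase_le {a : ι} (ha : a ∉ s) :
    ∑ x ∈ A a, #(transversals s fun i => (A i).erase x) ≤ #(transversals (insert a s) A) := by
  calc ∑ x ∈ A a, #(transversals s fun i => (A i).erase x)
      = #((A a).biUnion fun x => (transversals s fun i => (A i).erase x).image
          (Pi.cons s a x)) := by
        rw [card_biUnion]
        · exact sum_congr rfl fun x _ => (card_image_of_injective _ (Pi.cons_injective ha)).symm
        · intro x _ y _ hxy
          simp only [Function.onFun, disjoint_left, mem_image]
          rintro _ ⟨f, -, rfl⟩ ⟨g, -, hg⟩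
          exact hxy (by simpa using (congr_fun₂ hg a (mem_insert_self a s)).symm)
    _ ≤ #(transversals (insert a s) A) := by
        refine card_le_card fun F hF => ?_
        obtain ⟨x, hx, f, hf, rfl⟩ : ∃ x ∈ A a, ∃ f ∈ transversals s fun i => (A i).erase x,
            Pi.cons s a x f = F := by simpa using hF
        rw [mem_transversals] at hf ⊢
        have hcons : ∀ i hi, i ≠ a → Pi.cons s a x f i hi ∈ (A i).erase x := fun i hi hia => by
          rw [Pi.cons_ne (Ne.symm hia)]
          exact hf.1 _ _
        refine ⟨fun i hi => ?_, fun i hi j hj hij => ?_⟩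
        · by_cases hia : i = a
          · subst hia
            simpa using hx
          · exact mem_of_mem_erase (hcons i hi hia)
        · by_cases hia : i = a <;> by_cases hja : j = a
          · rw [hia, hja]
          · subst hia
            rw [Pi.cons_same] at hij
            exact absurd hij.symm (ne_of_mem_erase (hcons j hj hja))
          · subst hja
            rw [Pi.cons_same] at hij
            exact absurd hij (ne_of_mem_erase (hcons i hi hia))
          · rw [Pi.cons_ne (Ne.symm hia), Pi.cons_ne (Ne.symm hja)] at hij
            exact hf.2 _ _ _ _ hij

theorem HallCondition.factorial_le_card_transversals (hA : HallCondition s A) {r : ℕ}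
    (hr : ∀ i ∈ s, r ≤ #(A i)) (hrs : r ≤ #s) : r ! ≤ #(transversals s A) := by
  induction s using Finset.strongInduction generalizing A r with
  | H s ih =>
  cases r with
  | zero => simpa using card_pos.mpr hA.transversals_nonempty
  | succ r =>
  -- Either some nonempty proper `t` is tight, and transversals of `t` extend to `s`, or every such
  -- `t` has surplus, and then any choice of representative for one element keeps Hall's condition.
  by_cases htight : ∃ t ⊂ s, t.Nonempty ∧ #(t.biUnion A) ≤ #t
  · obtain ⟨t, hts, ⟨i, hi⟩, htA⟩ := htight
    have hrt : r + 1 ≤ #t :=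
      (hr i (hts.subset hi)).trans ((card_le_card (subset_biUnion_of_mem A hi)).trans htA)
    exact (ih t hts (fun u hu => hA u (hu.trans hts.subset)) (fun i hi => hr i (hts.subset hi))
      hrt).trans (card_transversals_le_of_tight hA hts.subset htA)
  · push Not at htight
    obtain ⟨a, ha⟩ : s.Nonempty := card_pos.mp (by omega)
    obtain ⟨s, has, rfl⟩ : ∃ s', a ∉ s' ∧ insert a s' = s :=
      ⟨s.erase a, notMem_erase a s, insert_erase ha⟩
    have hsub : ∀ x ∈ A a, r ! ≤ #(transversals s fun i => (A i).erase x) := by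
      intro x _
      refine ih s (ssubset_insert has) (erase_of_lt (fun t hts ht => htight t
        (ssubset_of_subset_of_ssubset hts (ssubset_insert has)) ht) x) (fun i hi => ?_) ?_
      · have := hr i (mem_insert_of_mem hi)
        have := pred_card_le_card_erase (s := A i) (a := x)
        omega
      · rw [card_insert_of_notMem has] at hrs
        omega
    calc (r + 1)! = (r + 1) * r ! := Nat.factorial_succ r
      _ ≤ #(A a) * r ! := Nat.mul_le_mul_right _ (hr a (mem_insert_self a s))
      _ = ∑ _x ∈ A a, r ! := by rw [sum_const, smul_eq_mul]
      _ ≤ ∑ x ∈ A a, #(transversals s fun i => (A i).erase x) := sum_le_sum hsub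
      _ ≤ _ := sum_card_transversals_erase_le has

end Finset

section LatinRect

def IsLatinRect {k n : ℕ} (L : Fin k → Fin n → Fin n) : Prop :=
  (∀ i, Function.Injective (L i)) ∧ ∀ j, Function.Injective fun i => L i j

open Classical in
noncomputable def latinRects (k n : ℕ) : Finset (Fin k → Fin n → Fin n) :=
  {L | IsLatinRect L}

def availSymbols {k n : ℕ} (R : Fin k → Fin n → Fin n) (j : Fin n) : Finset (Fin n) :=
  (univ.image fun i => R i j)ᶜ

variable {k n : ℕ}

lemma mem_latinRects {L : Fin k → Fin n → Fin n} : L ∈ latinRects k n ↔ IsLatinRect L := by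
  simp [latinRects]

lemma mem_availSymbols {R : Fin k → Fin n → Fin n} {j x : Fin n} :
    x ∈ availSymbols R j ↔ ∀ i, R i j ≠ x := by
  simp [availSymbols]

namespace IsLatinRect

variable {R : Fin k → Fin n → Fin n}

lemma card_availSymbols (hR : IsLatinRect R) (j : Fin n) : #(availSymbols R j) = n - k := by
  rw [availSymbols, card_compl, card_image_of_injective _ (hR.2 j), card_univ, Fintype.card_fin,
    Fintype.card_fin]

lemma card_filter_mem_availSymbols_le (hR : IsLatinRect R) (x : Fin n) :
    #{j | x ∈ availSymbols R j} ≤ n - k := by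
  choose col hcol using fun i => (Finite.surjective_of_injective (hR.1 i)) x
  have hcol_inj : Function.Injective col := fun i i' h =>
    hR.2 (col i) ((hcol i).trans ((congrArg (R i') h).trans (hcol i')).symm)
  have hk : k ≤ #{j | x ∉ availSymbols R j} := by
    simpa [card_image_of_injective _ hcol_inj] using card_le_card (s := univ.image col)
      fun j hj => by
        obtain ⟨i, -, rfl⟩ := mem_image.mp hj
        simpa [mem_availSymbols] using ⟨i, hcol i⟩
  have := card_filter_add_card_filter_not (s := univ) fun j => x ∈ availSymbols R j
  simp only [card_univ, Fintype.card_fin] at this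
  omega

lemma hallCondition_availSymbols (hR : IsLatinRect R) (hkn : k < n) :
    HallCondition univ (availSymbols R) := by
  intro t _
  refine Nat.le_of_mul_le_mul_right (card_mul_le_card_mul (fun j x => x ∈ availSymbols R j)
    (fun j hj => ?_) fun x _ => ?_) (show 0 < n - k by omega)
  · rw [bipartiteAbove, filter_mem_eq_inter, inter_eq_right.mpr (subset_biUnion_of_mem _ hj),
      hR.card_availSymbols]
  · exact (card_le_card (filter_subset_filter _ (subset_univ t))).trans
      (hR.card_filter_mem_availSymbols_le x)

lemma init {L : Fin (k + 1) → Fin n → Fin n} (hL : IsLatinRect L) : IsLatinRect (Fin.init L) :=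
  ⟨fun i => hL.1 i.castSucc, fun j _ _ h => Fin.castSucc_injective k (hL.2 j h)⟩

lemma snoc (hR : IsLatinRect R) {row : Fin n → Fin n} (hrow : Function.Injective row)
    (havail : ∀ j, row j ∈ availSymbols R j) :
    IsLatinRect (Fin.snoc (α := fun _ => Fin n → Fin n) R row) := by
  have hne : ∀ i j, R i j ≠ row j := fun i j => mem_availSymbols.mp (havail j) i
  refine ⟨Fin.lastCases (by simpa using hrow) fun i => by simpa using hR.1 i, fun j => ?_⟩
  intro i₁ i₂ h
  induction i₁ using Fin.lastCases <;> induction i₂ using Fin.lastCases <;>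
    simp only [Fin.snoc_castSucc, Fin.snoc_last] at h
  · rfl
  · exact absurd h.symm (hne _ j)
  · exact absurd h (hne _ j)
  · exact congrArg Fin.castSucc (hR.2 j h)

end IsLatinRect

lemma factorial_mul_card_latinRects_le (hkn : k < n) :
    (n - k)! * #(latinRects k n) ≤ #(latinRects (k + 1) n) := by
  rw [card_eq_sum_card_fiberwise (f := Fin.init) fun L hL =>
    mem_latinRects.mpr (mem_latinRects.mp hL).init, mul_comm, ← smul_eq_mul, ← sum_const]
  refine sum_le_sum fun R hR => ?_
  replace hR := mem_latinRects.mp hR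
  calc (n - k)! ≤ #(transversals univ (availSymbols R)) :=
        (hR.hallCondition_availSymbols hkn).factorial_le_card_transversals
          (fun j _ => (hR.card_availSymbols j).ge) (by simp)
    _ ≤ _ := by
      refine card_le_card_of_injOn (fun f => Fin.snoc R fun j => f j (mem_univ j)) ?_ ?_
      · intro f hf
        rw [mem_coe, mem_transversals] at hf
        simp only [coe_filter, Set.mem_ofPred_eq, mem_latinRects, Fin.init_snoc, and_true]
        exact hR.snoc (fun j j' h => hf.2 j _ j' _ h) fun j => hf.1 j _
      · intro f _ f' _ h
        funext j _
        simpa using congr_fun (congr_fun h (Fin.last k)) j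

lemma prod_factorial_le_card_latinRects (hk : k ≤ n) :
    ∏ i ∈ range k, (n - i)! ≤ #(latinRects k n) := by
  induction k with
  | zero =>
    simpa using card_pos.mpr ⟨Fin.elim0, mem_latinRects.mpr ⟨fun i => i.elim0, fun _ i => i.elim0⟩⟩
  | succ k ih =>
    rw [prod_range_succ, mul_comm]
    exact (Nat.mul_le_mul_left _ (ih (by omega))).trans (factorial_mul_card_latinRects_le hk)

end LatinRect

section Rank

variable {F : Type*} [Field F] {n1 n2 n3 : ℕ}

def HasDecomposition (T : Fin n1 → Fin n2 → Fin n3 → F) (r : ℕ) : Prop :=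
  ∃ (a : Fin r → Fin n1 → F) (b : Fin r → Fin n2 → F) (c : Fin r → Fin n3 → F),
    ∀ i j k, T i j k = ∑ l, a l i * b l j * c l k

lemma hasDecomposition_mul (T : Fin n1 → Fin n2 → Fin n3 → F) : HasDecomposition T (n2 * n3) := by
  refine ⟨fun l i => T i (finProdFinEquiv.symm l).1 (finProdFinEquiv.symm l).2,
    fun l j => if (finProdFinEquiv.symm l).1 = j then 1 else 0,
    fun l k => if (finProdFinEquiv.symm l).2 = k then 1 else 0, fun i j k => ?_⟩
  rw [← finProdFinEquiv.sum_comp, Fintype.sum_prod_type]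
  simp [mul_ite]

lemma HasDecomposition.mono {T : Fin n1 → Fin n2 → Fin n3 → F} {r s : ℕ}
    (hT : HasDecomposition T r) (hrs : r ≤ s) : HasDecomposition T s := by
  induction s, hrs using Nat.le_induction with
  | base => exact hT
  | succ s _ ih =>
    obtain ⟨a, b, c, habc⟩ := ih
    exact ⟨Fin.cons 0 a, Fin.cons 0 b, Fin.cons 0 c, fun i j k => by
      simp [Fin.sum_univ_succ, habc i j k]⟩

lemma hasDecomposition_rank3 (T : Fin n1 → Fin n2 → Fin n3 → F) :
    HasDecomposition T (rank3 T) :=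
  Nat.sInf_mem (s := {r | HasDecomposition T r}) ⟨_, hasDecomposition_mul T⟩

lemma exists_lt_rank3_of_pow_lt_card [Fintype F] {S : Finset (Fin n1 → Fin n2 → Fin n3 → F)}
    {r : ℕ} (hS : Fintype.card F ^ ((n1 + n2 + n3) * r) < #S) : ∃ T ∈ S, r < rank3 T := by
  classical
  by_contra! hrank
  let Φ : (Fin r → Fin n1 → F) × (Fin r → Fin n2 → F) × (Fin r → Fin n3 → F) →
      Fin n1 → Fin n2 → Fin n3 → F := fun p i j k => ∑ l, p.1 l i * p.2.1 l j * p.2.2 l k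
  have hSΦ : S ⊆ univ.image Φ := fun T hT => by
    obtain ⟨a, b, c, habc⟩ := (hasDecomposition_rank3 T).mono (hrank T hT)
    exact mem_image.mpr ⟨(a, b, c), mem_univ _, funext fun i => funext fun j => funext fun k =>
      (habc i j k).symm⟩
  refine hS.not_ge ((card_le_card hSΦ).trans (card_image_le.trans_eq ?_))
  simp only [card_univ, Fintype.card_prod, Fintype.card_fun, Fintype.card_fin]
  ring

end Rank

section LatinTensor

variable (F : Type*) [Field F] {n : ℕ}

def latinTensor (L : Fin n → Fin n → Fin n) : Fin n → Fin n → Fin n → F :=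
  fun i j k => if L i j = k then 1 else 0

variable {F}

lemma latinTensor_eq_one {L : Fin n → Fin n → Fin n} {i j k : Fin n} :
    latinTensor F L i j k = 1 ↔ L i j = k := by
  simp [latinTensor]

lemma latinTensor_injective : Function.Injective (latinTensor F (n := n)) := fun L _ h =>
  funext₂ fun i j => (latinTensor_eq_one.mp (congr_fun₃ h i j (L i j) ▸
    latinTensor_eq_one.mpr rfl)).symm

lemma IsLatinRect.isPermutationTensor3 {L : Fin n → Fin n → Fin n} (hL : IsLatinRect L) :
    IsPermutationTensor3 (latinTensor F L) := by
  refine ⟨fun i j k => by unfold latinTensor; split_ifs <;> simp, fun j k => ?_, fun i k => ?_,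
    fun i j => ?_⟩ <;> simp only [latinTensor_eq_one]
  · exact (Finite.injective_iff_bijective.mp (hL.2 j)).existsUnique k
  · exact (Finite.injective_iff_bijective.mp (hL.1 i)).existsUnique k
  · exact existsUnique_eq'

end LatinTensor

lemma pow_le_prod_factorial (n : ℕ) :
    (n / 4 + 1) ^ (n / 4 * (n / 2)) ≤ ∏ i ∈ range n, (n - i)! := by
  have hfac : (n / 4 + 1) ^ (n / 4) ≤ (n / 2)! :=
    calc (n / 4 + 1) ^ (n / 4) ≤ (n / 4)! * (n / 4 + 1) ^ (n / 4) :=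
          Nat.le_mul_of_pos_left _ (Nat.factorial_pos _)
      _ ≤ (n / 4 + n / 4)! := Nat.factorial_mul_pow_le_factorial
      _ ≤ (n / 2)! := Nat.factorial_le (by omega)
  calc (n / 4 + 1) ^ (n / 4 * (n / 2)) = ∏ _i ∈ range (n / 2), (n / 4 + 1) ^ (n / 4) := by
        rw [prod_const, card_range, pow_mul]
    _ ≤ ∏ i ∈ range (n / 2), (n - i)! := prod_le_prod' fun i hi =>
        hfac.trans (Nat.factorial_le (by have := mem_range.mp hi; omega))
    _ ≤ ∏ i ∈ range n, (n - i)! := prod_le_prod_of_subset_of_one_le'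
        (range_subset_range.mpr (by omega)) fun i _ _ => Nat.one_le_of_lt (Nat.factorial_pos _)

lemma sq_mul_log_le_log_prod_factorial {n : ℕ} (hn : 16 ≤ n) :
    (n : ℝ) ^ 2 * Real.log n / 64 ≤ Real.log (∏ i ∈ range n, (n - i)! : ℕ) := by
  have hn' : (16 : ℝ) ≤ n := by exact_mod_cast hn
  have h4 : (n : ℝ) / 8 ≤ (n / 4 : ℕ) := by
    rw [div_le_iff₀ (by norm_num)]; exact_mod_cast (by omega : n ≤ n / 4 * 8)
  have h2 : (n : ℝ) / 4 ≤ (n / 2 : ℕ) := by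
    rw [div_le_iff₀ (by norm_num)]; exact_mod_cast (by omega : n ≤ n / 2 * 4)
  have hlog : Real.log n / 2 ≤ Real.log ((n / 4 : ℕ) + 1) := by
    have hquarter : (n : ℝ) / 4 ≤ (n / 4 : ℕ) + 1 := by
      rw [div_le_iff₀ (by norm_num)]; exact_mod_cast (by omega : n ≤ (n / 4 + 1) * 4)
    have hsq := Real.log_le_log (by positivity) (show (n : ℝ) ≤ (n / 4) ^ 2 by nlinarith)
    rw [Real.log_pow] at hsq
    have := Real.log_le_log (by positivity) hquarter
    push_cast at hsq
    linarith
  have hlogn : 0 ≤ Real.log n := Real.log_nonneg (by linarith)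
  calc (n : ℝ) ^ 2 * Real.log n / 64 = (n / 8) * (n / 4) * (Real.log n / 2) := by ring
    _ ≤ (n / 4 : ℕ) * (n / 2 : ℕ) * Real.log ((n / 4 : ℕ) + 1) := by gcongr
    _ = Real.log ((n / 4 + 1) ^ (n / 4 * (n / 2)) : ℕ) := by
        rw [Nat.cast_pow, Real.log_pow]; push_cast; ring
    _ ≤ Real.log (∏ i ∈ range n, (n - i)! : ℕ) :=
        Real.log_le_log (by positivity) (by exact_mod_cast pow_le_prod_factorial n)

lemma pow_lt_prod_factorial {q n : ℕ} {c : ℝ} (hq : 1 < q) (hn : 16 ≤ n) (hc₀ : 0 ≤ c)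
    (hc : c < 1 / 192) :
    q ^ ((n + n + n) * ⌊c * n * Real.log n / Real.log q⌋₊) < ∏ i ∈ range n, (n - i)! := by
  set r := ⌊c * n * Real.log n / Real.log q⌋₊
  have hlogq : 0 < Real.log q := Real.log_pos (by exact_mod_cast hq)
  have hlogn : 0 < Real.log n := Real.log_pos (by exact_mod_cast (by omega : 1 < n))
  have hr : (r : ℝ) * Real.log q ≤ c * n * Real.log n :=
    (le_div_iff₀ hlogq).mp (Nat.floor_le (by positivity))
  have hpos : 0 < (n : ℝ) ^ 2 * Real.log n := by positivity
  have hlog : Real.log (q ^ ((n + n + n) * r) : ℕ) < Real.log (∏ i ∈ range n, (n - i)! : ℕ) :=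
    calc Real.log (q ^ ((n + n + n) * r) : ℕ) = 3 * n * (r * Real.log q) := by
          rw [Nat.cast_pow, Real.log_pow]; push_cast; ring
      _ ≤ 3 * n * (c * n * Real.log n) := by gcongr
      _ < (n : ℝ) ^ 2 * Real.log n / 64 := by nlinarith
      _ ≤ _ := sq_mul_log_le_log_prod_factorial hn
  exact_mod_cast (Real.log_lt_log_iff (by positivity) (by positivity)).mp hlog

/-- There is an absolute constant `c > 0` such that for every finite field `F` there is
`N` so that for all `n ≥ N` there exists an order-3 permutation tensor `T : [n]³ → F`
with `rank_F(T) ≥ c · n · (log n)/(log |F|)`. -/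
theorem stmt5 : ∃ c : ℝ, 0 < c ∧ ∀ (F : Type) [Field F] [Fintype F], ∃ N : ℕ,
    ∀ n : ℕ, N ≤ n → ∃ T : Fin n → Fin n → Fin n → F, IsPermutationTensor3 T ∧
      c * n * Real.log n / Real.log (Fintype.card F) ≤ (rank3 T : ℝ) := by
  refine ⟨1 / 256, by norm_num, fun F _ _ => ⟨16, fun n hn => ?_⟩⟩
  have hcard : Fintype.card F ^ ((n + n + n) * ⌊1 / 256 * n * Real.log n /
      Real.log (Fintype.card F)⌋₊) < #((latinRects n n).map ⟨_, latinTensor_injective (F := F)⟩) := by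
    rw [card_map]
    exact (pow_lt_prod_factorial Fintype.one_lt_card hn (by norm_num) (by norm_num)).trans_le
      (prod_factorial_le_card_latinRects le_rfl)
  obtain ⟨T, hT, hrank⟩ := exists_lt_rank3_of_pow_lt_card hcard
  obtain ⟨L, hL, rfl⟩ := mem_map.mp hT
  exact ⟨latinTensor F L, (mem_latinRects.mp hL).isPermutationTensor3,
    (Nat.lt_floor_add_one _).le.trans (by exact_mod_cast hrank)⟩
end

section
/- Let G be a finite abelian group and d ≥ 2. Then the tensor rank of the group tensor T_G^d over the complex numbers ℂ is exactly |G|. -/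
/-!
By orthogonality of the characters of the finite abelian group `G`,
`T_G^d = |G|⁻¹ ∑_ψ ψ ⊗ ⋯ ⊗ ψ`, a sum of `|G|` simple tensors.
Conversely, setting the first coordinate to `a`, the second to `b⁻¹` and all others to `1`
gives the identity matrix `[a = b]` of size `|G|` as a flattening of `T_G^d`, and the rank of a
flattening never exceeds the tensor rank.
-/

/-- The tensor rank of an order-`d` cube tensor `T : I^d → F`:
the least `r` such that `T` is the sum of `r` simple tensors. -/
noncomputable def tensorRank (F : Type*) [Field F] {d : ℕ} {I : Type*}
    (T : (Fin d → I) → F) : ℕ :=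
  sInf {r : ℕ | ∃ v : Fin r → Fin d → I → F, ∀ i, T i = ∑ l, ∏ j, v l j (i j)}

/-- The order-`d` group tensor of a group `G` over `F`:
`T(g₁, …, g_d) = 1` if `g₁ ⋯ g_d = 1` and `0` otherwise. -/
noncomputable def groupTensor (F : Type*) [Field F] (G : Type*) [Group G] [DecidableEq G]
    (d : ℕ) : (Fin d → G) → F :=
  fun g => if (List.ofFn g).prod = 1 then 1 else 0

open Finset Module Submodule

section TensorRank

variable {F I ι : Type*} [Field F] [Fintype ι] {d : ℕ} {T : (Fin d → I) → F}

theorem exists_fin_decomposition (v : ι → Fin d → I → F)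
    (hv : ∀ i, T i = ∑ l, ∏ j, v l j (i j)) :
    ∃ w : Fin (Fintype.card ι) → Fin d → I → F, ∀ i, T i = ∑ l, ∏ j, w l j (i j) :=
  ⟨fun l => v ((Fintype.equivFin ι).symm l), fun i => by
    rw [hv, ← (Fintype.equivFin ι).symm.sum_comp]⟩

theorem tensorRank_le_card (v : ι → Fin d → I → F) (hv : ∀ i, T i = ∑ l, ∏ j, v l j (i j)) :
    tensorRank F T ≤ Fintype.card ι :=
  Nat.sInf_le (exists_fin_decomposition v hv)

theorem exists_decomposition_of_length_tensorRank (v : ι → Fin d → I → F)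
    (hv : ∀ i, T i = ∑ l, ∏ j, v l j (i j)) :
    ∃ w : Fin (tensorRank F T) → Fin d → I → F, ∀ i, T i = ∑ l, ∏ j, w l j (i j) :=
  Nat.sInf_mem (s := {r | ∃ w : Fin r → Fin d → I → F, ∀ i, T i = ∑ l, ∏ j, w l j (i j)})
    ⟨_, exists_fin_decomposition v hv⟩

end TensorRank

/-- Every row `b ↦ T (a, x b)` is a combination of the `r` vectors `b ↦ ∏ j, v l j.succ (x b j)`. -/
theorem finrank_span_slices_le {F I J : Type*} [Field F] {n r : ℕ} {T : (Fin (n + 1) → I) → F}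
    (v : Fin r → Fin (n + 1) → I → F) (hv : ∀ i, T i = ∑ l, ∏ j, v l j (i j))
    (x : J → Fin n → I) :
    finrank F (span F (Set.range fun a b => T (Fin.cons a (x b)))) ≤ r := by
  set w : Fin r → J → F := fun l b => ∏ j : Fin n, v l j.succ (x b j)
  have hrow : ∀ a, (fun b => T (Fin.cons a (x b))) = ∑ l, v l 0 a • w l := by
    intro a
    ext b
    simp [hv, Fin.prod_univ_succ, w]
  have hle : span F (Set.range fun a b => T (Fin.cons a (x b))) ≤ span F (Set.range w) := by
    rw [span_le]
    rintro _ ⟨a, rfl⟩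
    dsimp only
    rw [hrow]
    exact sum_mem fun l _ => smul_mem _ _ (subset_span ⟨l, rfl⟩)
  have : FiniteDimensional F (span F (Set.range w)) :=
    FiniteDimensional.span_of_finite F (Set.finite_range w)
  calc _ ≤ finrank F (span F (Set.range w)) := finrank_mono hle
    _ ≤ Fintype.card (Fin r) := finrank_range_le_card w
    _ = r := Fintype.card_fin r

theorem finrank_span_slices_groupTensor (F G : Type*) [Field F] [Group G] [Fintype G]
    [DecidableEq G] (n : ℕ) :
    finrank F (span F (Set.range fun a b : G =>
      groupTensor F G (n + 2) (Fin.cons a (Fin.cons b⁻¹ 1)))) = Fintype.card G := by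
  have hrows : (fun a b : G => groupTensor F G (n + 2) (Fin.cons a (Fin.cons b⁻¹ 1)))
      = Pi.basisFun F G := by
    ext a b
    simp [groupTensor, List.ofFn_succ, mul_inv_eq_one, Pi.single_apply, eq_comm]
  rw [hrows, finrank_span_eq_card (Pi.basisFun F G).linearIndependent]

theorem AddChar.apply_ofMul_prod {G M ι : Type*} [CommGroup G] [CommMonoid M]
    (ψ : AddChar (Additive G) M) (s : Finset ι) (g : ι → G) :
    ψ (Additive.ofMul (∏ i ∈ s, g i)) = ∏ i ∈ s, ψ (Additive.ofMul (g i)) :=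
  map_prod ψ.toMonoidHom g s

theorem groupTensor_eq_sum_characters (G : Type*) [CommGroup G] [Fintype G] [DecidableEq G]
    (d : ℕ) (i : Fin d → G) :
    groupTensor ℂ G d i =
      (Fintype.card G : ℂ)⁻¹ * ∑ ψ : AddChar (Additive G) ℂ, ∏ j, ψ (Additive.ofMul (i j)) := by
  have hN : (Fintype.card G : ℂ) ≠ 0 := Nat.cast_ne_zero.2 Fintype.card_ne_zero
  simp_rw [← AddChar.apply_ofMul_prod, AddChar.sum_apply_eq_ite, Fintype.card_additive,
    ofMul_eq_zero, groupTensor, List.prod_ofFn]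
  split_ifs <;> simp [hN]

theorem groupTensor_eq_sum_prod (G : Type*) [CommGroup G] [Fintype G] [DecidableEq G]
    (n : ℕ) (i : Fin (n + 1) → G) :
    groupTensor ℂ G (n + 1) i = ∑ ψ : AddChar (Additive G) ℂ,
      ∏ j, (Fin.cons (fun g => (Fintype.card G : ℂ)⁻¹ * ψ (Additive.ofMul g))
        (fun _ g => ψ (Additive.ofMul g)) : Fin (n + 1) → G → ℂ) j (i j) := by
  simp [groupTensor_eq_sum_characters, mul_sum, Fin.prod_univ_succ, mul_assoc]

/-- For any finite abelian group `G` and `d ≥ 2`, the rank of the group tensor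
`T_G^d` over the complex numbers is exactly `|G|`. -/
theorem stmt8 (G : Type*) [CommGroup G] [Fintype G] [DecidableEq G] (d : ℕ) (hd : 2 ≤ d) :
    tensorRank ℂ (groupTensor ℂ G d) = Fintype.card G := by
  obtain ⟨n, rfl⟩ : ∃ n, d = n + 2 := ⟨d - 2, by omega⟩
  have hdec := groupTensor_eq_sum_prod G (n + 1)
  apply le_antisymm
  · simpa using tensorRank_le_card _ hdec
  · obtain ⟨w, hw⟩ := exists_decomposition_of_length_tensorRank _ hdec
    calc Fintype.card G = _ := (finrank_span_slices_groupTensor ℂ G n).symm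
      _ ≤ tensorRank ℂ (groupTensor ℂ G (n + 2)) := finrank_span_slices_le w hw _
end

section
/- Let F be a field with at least d(n−1)+1 elements and d ≥ 2. Then the group tensor of the cyclic group ℤ_n satisfies rank_F(T_{ℤ_n}^d) ≤ d(n−1)+1. -/
/-- The order-`d` group tensor of the cyclic group `ℤ/nℤ` over `F`:
`T(i₁,…,i_d) = 1` if `i₁ + ⋯ + i_d ≡ 0 (mod n)` and `0` otherwise. -/
noncomputable def cyclicGroupTensor (F : Type*) [Field F] (n d : ℕ) :
    (Fin d → ZMod n) → F :=
  fun i => if (∑ j, i j) = 0 then 1 else 0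

/-!
A vector `i` of residues contributes to `T_{ℤₙ}^d` only through the integer `s = ∑ⱼ val(iⱼ)`,
which lies in `{0, …, d(n-1)}`. For `r = d(n-1)+1` distinct scalars `α₀, …, α_{r-1}` the
Vandermonde matrix is invertible, so every function of `s ∈ {0, …, r-1}` (here the indicator
of `n ∣ s`) is a combination `∑ₗ cₗ αₗ^s`; and `cₗ αₗ^s = cₗ ∏ⱼ αₗ^{val(iⱼ)}` is a simple tensor.
-/

open Finset

theorem tensorRank_le_of_eq_sum {F : Type*} [Field F] {d r : ℕ} {I : Type*}
    {T : (Fin d → I) → F} (v : Fin r → Fin d → I → F)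
    (hT : ∀ i, T i = ∑ l, ∏ j, v l j (i j)) : tensorRank F T ≤ r :=
  Nat.sInf_le ⟨v, hT⟩

theorem exists_sum_mul_pow_eq {F : Type*} [Field F] {r : ℕ} {α : Fin r → F}
    (hα : Function.Injective α) (χ : Fin r → F) :
    ∃ c : Fin r → F, ∀ s : Fin r, ∑ l, c l * α l ^ (s : ℕ) = χ s := by
  have hunit : IsUnit (Matrix.vandermonde α) :=
    (Matrix.isUnit_iff_isUnit_det _).mpr
      (isUnit_iff_ne_zero.mpr (Matrix.det_vandermonde_ne_zero_iff.mpr hα))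
  obtain ⟨c, hc⟩ := Matrix.vecMul_surjective_iff_isUnit.mpr hunit χ
  exact ⟨c, fun s => by simpa [Matrix.vecMul, dotProduct, Matrix.vandermonde] using congrFun hc s⟩

theorem tensorRank_comp_sum_le {F : Type*} [Field F] {d m : ℕ} [NeZero d] {I : Type*}
    (φ : I → ℕ) (hφ : ∀ a, φ a ≤ m) (f : ℕ → F) (α : Fin (d * m + 1) ↪ F) :
    tensorRank F (fun i : Fin d → I => f (∑ j, φ (i j))) ≤ d * m + 1 := by
  obtain ⟨c, hc⟩ := exists_sum_mul_pow_eq α.injective (fun s => f s)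
  refine tensorRank_le_of_eq_sum (fun l j a => (if j = 0 then c l else 1) * α l ^ φ a) fun i => ?_
  have hsum : ∑ j, φ (i j) < d * m + 1 := by
    have := sum_le_sum fun j (_ : j ∈ univ) => hφ (i j)
    simp only [sum_const, card_univ, Fintype.card_fin, smul_eq_mul] at this
    omega
  rw [← hc ⟨_, hsum⟩]
  refine sum_congr rfl fun l _ => ?_
  rw [prod_mul_distrib, prod_pow_eq_pow_sum, prod_ite_eq' univ (0 : Fin d)]
  simp

theorem cyclicGroupTensor_eq_ite_dvd (F : Type*) [Field F] (n d : ℕ) [NeZero n]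
    (i : Fin d → ZMod n) :
    cyclicGroupTensor F n d i = if n ∣ ∑ j, (i j).val then 1 else 0 := by
  simp only [cyclicGroupTensor, ← ZMod.natCast_eq_zero_iff, Nat.cast_sum, ZMod.natCast_zmod_val]

/-- If `F` has at least `d(n-1)+1` elements and `d ≥ 2`, then the group tensor of the
cyclic group `ℤ/nℤ` satisfies `rank_F(T_{ℤₙ}^d) ≤ d(n-1)+1`. -/
theorem stmt10 (F : Type*) [Field F] (d n : ℕ) (hd : 2 ≤ d) (hn : 1 ≤ n)
    (hF : ((d * (n - 1) + 1 : ℕ) : Cardinal) ≤ Cardinal.mk F) :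
    tensorRank F (cyclicGroupTensor F n d) ≤ d * (n - 1) + 1 := by
  have : NeZero n := ⟨by omega⟩
  have : NeZero d := ⟨by omega⟩
  obtain ⟨α⟩ : Nonempty (Fin (d * (n - 1) + 1) ↪ F) :=
    Cardinal.lift_mk_le'.mp (by simpa using hF)
  have hval : ∀ a : ZMod n, a.val ≤ n - 1 := fun a => by have := a.val_lt; omega
  have := tensorRank_comp_sum_le ZMod.val hval (fun s => if n ∣ s then (1 : F) else 0) α
  rwa [funext (cyclicGroupTensor_eq_ite_dvd F n d)]
end

section
/- Let F be a linearly ordered field, n ≥ 1 and d ≥ 2, and consider the group tensor T_{ℤ_n}^d : (ℤ_n)^d → F. Then (1) rank_F(T_{ℤ_n}^d) ≤ d(n−1)+1, and (2) the monotone tensor rank of T_{ℤ_n}^d over F is exactly n^{d−1}. -/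
/-- The monotone tensor rank over a linearly ordered field: the least `r` such that
`T` is a sum of `r` simple tensors all of whose vectors have nonnegative entries. -/
noncomputable def mrank (F : Type*) [Field F] [LinearOrder F] [IsStrictOrderedRing F] {d : ℕ} {I : Type*}
    (T : (Fin d → I) → F) : ℕ :=
  sInf {r : ℕ | ∃ v : Fin r → Fin d → I → F,
    (∀ l j i, 0 ≤ v l j i) ∧ ∀ i, T i = ∑ l, ∏ j, v l j (i j)}

/-!
Rank: since `T(i) = f(Σⱼ val iⱼ)` with `Σⱼ val iⱼ ≤ d(n-1)`, solving the transposed Vandermonde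
system `Σₜ cₜ tˢ = f(s)` for `s ≤ d(n-1)` at the `d(n-1)+1` points `t = 0, 1, …` gives
`T = Σₜ cₜ · (t^{val ·})^{⊗d}`.

Monotone rank: `T` is the indicator of the zero-sum set `Z`, so it is a sum of `|Z| = n^{d-1}`
point indicators. Conversely, in a nonnegative decomposition every term is `≤ T`, so its support
is a box avoiding the zeros of `T`; a box containing two points `a ≠ b` of `Z` also contains the
point that agrees with `a` except in one coordinate where it takes `b`'s value, and that point
has nonzero sum. Hence each term covers at most one point of `Z`.
-/

open Finset
open scoped Matrix

theorem exists_sum_mul_pow_eq_of_injective {F : Type*} [Field F] {N : ℕ} {x : Fin N → F}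
    (hx : Function.Injective x) (g : Fin N → F) :
    ∃ c : Fin N → F, ∀ s : Fin N, ∑ t, c t * x t ^ (s : ℕ) = g s := by
  have hunit : IsUnit (Matrix.vandermonde x)ᵀ := by
    rw [Matrix.isUnit_iff_isUnit_det, Matrix.det_transpose, isUnit_iff_ne_zero]
    exact Matrix.det_vandermonde_ne_zero_iff.2 hx
  obtain ⟨c, hc⟩ := Matrix.mulVec_surjective_iff_isUnit.2 hunit g
  exact ⟨c, fun s => by simp [← hc, Matrix.mulVec, dotProduct, mul_comm]⟩

theorem tensorRank_le_of_eq_comp_sum {F : Type*} [Field F] [CharZero F] {d : ℕ} [NeZero d]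
    {I : Type*} (T : (Fin d → I) → F) (e : I → ℕ) (k : ℕ) (he : ∀ y, e y ≤ k) (f : ℕ → F)
    (hT : ∀ i, T i = f (∑ j, e (i j))) :
    tensorRank F T ≤ d * k + 1 := by
  obtain ⟨c, hc⟩ := exists_sum_mul_pow_eq_of_injective
    (x := fun t : Fin (d * k + 1) => ((t : ℕ) : F))
    (Nat.cast_injective.comp Fin.val_injective) (fun s => f s)
  refine Nat.sInf_le ⟨fun t j y => (if j = 0 then c t else 1) * ((t : ℕ) : F) ^ e y, fun i => ?_⟩
  have hlt : ∑ j, e (i j) < d * k + 1 := by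
    have := sum_le_sum fun j (_ : j ∈ univ) => he (i j)
    simp only [sum_const, card_univ, Fintype.card_fin, smul_eq_mul] at this
    omega
  rw [hT, ← hc ⟨_, hlt⟩]
  refine sum_congr rfl fun t _ => ?_
  rw [prod_mul_distrib, prod_ite_eq' univ 0 fun _ => c t, prod_pow_eq_pow_sum]
  simp

theorem exists_nonneg_decomposition_indicator {F : Type*} [Field F] [LinearOrder F]
    [IsStrictOrderedRing F] {d : ℕ} {I : Type*} [DecidableEq I] (S : Finset (Fin d → I)) :
    ∃ v : Fin #S → Fin d → I → F, (∀ l j y, 0 ≤ v l j y) ∧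
      ∀ i, (if i ∈ S then 1 else 0) = ∑ l, ∏ j, v l j (i j) := by
  refine ⟨fun l j y => if y = (S.equivFin.symm l : Fin d → I) j then 1 else 0,
    fun l j y => by positivity, fun i => ?_⟩
  simp_rw [Fintype.prod_boole, ← funext_iff]
  rw [Fintype.sum_equiv S.equivFin.symm _ (fun p : S => if i = p then (1 : F) else 0)
    (fun _ => rfl), sum_coe_sort S fun p => if i = p then (1 : F) else 0, sum_ite_eq]

theorem card_le_of_nonneg_decomposition {F : Type*} [Field F] [LinearOrder F]
    [IsStrictOrderedRing F] {d : ℕ} {I : Type*} (T : (Fin d → I) → F) {r : ℕ}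
    (v : Fin r → Fin d → I → F) (hv : ∀ l j y, 0 ≤ v l j y)
    (hT : ∀ i, T i = ∑ l, ∏ j, v l j (i j)) (Z : Finset (Fin d → I))
    (hZ : ∀ a ∈ Z, T a ≠ 0)
    (hmix : ∀ a ∈ Z, ∀ b ∈ Z, a ≠ b → ∃ q, T q = 0 ∧ ∀ j, q j = a j ∨ q j = b j) :
    #Z ≤ r := by
  have hcover : ∀ a : Z, ∃ l, ∀ j, v l j (a.1 j) ≠ 0 := by
    intro a
    by_contra! h
    exact hZ a a.2 <| (hT a).trans <| sum_eq_zero fun l _ =>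
      let ⟨j, hj⟩ := h l; prod_eq_zero (mem_univ j) hj
  choose φ hφ using hcover
  have hinj : Function.Injective φ := by
    intro a b hab
    by_contra hne
    obtain ⟨q, hq0, hq⟩ := hmix a a.2 b b.2 (Subtype.coe_ne_coe.2 hne)
    have hterm := (sum_eq_zero_iff_of_nonneg fun l _ => prod_nonneg fun j _ => hv l j (q j)).1
      ((hT q).symm.trans hq0) (φ a) (mem_univ _)
    obtain ⟨j, -, hj⟩ := prod_eq_zero_iff.1 hterm
    rcases hq j with h | h <;> rw [h] at hj
    · exact hφ a j hj
    · exact hφ b j (hab ▸ hj)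
  simpa using Fintype.card_le_of_injective φ hinj

theorem mrank_indicator_eq_card {F : Type*} [Field F] [LinearOrder F] [IsStrictOrderedRing F]
    {d : ℕ} {I : Type*} [DecidableEq I] (Z : Finset (Fin d → I))
    (hmix : ∀ a ∈ Z, ∀ b ∈ Z, a ≠ b → ∃ q ∉ Z, ∀ j, q j = a j ∨ q j = b j) :
    mrank F (fun i => if i ∈ Z then (1 : F) else 0) = #Z := by
  have hmem := exists_nonneg_decomposition_indicator (F := F) Z
  refine le_antisymm (Nat.sInf_le hmem) (le_csInf ⟨_, hmem⟩ ?_)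
  rintro r ⟨v, hv, hT⟩
  refine card_le_of_nonneg_decomposition _ v hv hT Z (fun a ha => by simp [ha]) ?_
  intro a ha b hb hab
  obtain ⟨q, hq, hqab⟩ := hmix a ha b hb hab
  exact ⟨q, by simp [hq], hqab⟩

theorem exists_mixture_sum_ne_zero {G : Type*} [AddCommGroup G] {d : ℕ} {a b : Fin d → G}
    (ha : ∑ j, a j = 0) (hab : a ≠ b) :
    ∃ q : Fin d → G, ∑ j, q j ≠ 0 ∧ ∀ j, q j = a j ∨ q j = b j := by
  obtain ⟨k, hk⟩ := Function.ne_iff.1 hab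
  refine ⟨a + Pi.single k (b k - a k), ?_, fun j => ?_⟩
  · simpa [sum_add_distrib, ha, sub_eq_zero] using hk.symm
  · rcases eq_or_ne j k with rfl | hj
    · simp
    · simp [hj]

theorem card_filter_sum_eq_zero {G : Type*} [AddCommGroup G] [Fintype G] [DecidableEq G]
    (m : ℕ) : #{i : Fin (m + 1) → G | ∑ j, i j = 0} = Fintype.card G ^ m := by
  calc #{i : Fin (m + 1) → G | ∑ j, i j = 0} = #(univ : Finset (Fin m → G)) := ?_
    _ = Fintype.card G ^ m := by simp
  refine card_nbij' Fin.init (fun a => Fin.snoc a (-∑ k, a k)) (fun _ _ => mem_univ _)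
    (fun a _ => by simp [Fin.sum_univ_castSucc]) (fun i hi => ?_) (fun a _ => Fin.init_snoc _ _)
  have hlast : -∑ k, Fin.init i k = i (Fin.last m) := by
    simp only [coe_filter, mem_univ, true_and, Set.mem_ofPred_eq, Fin.sum_univ_castSucc] at hi
    exact (eq_neg_of_add_eq_zero_right hi).symm
  simp only [hlast, Fin.snoc_init_self]

theorem cyclicGroupTensor_eq_indicator (F : Type*) [Field F] (n d : ℕ) [NeZero n] :
    cyclicGroupTensor F n d = fun i => if i ∈ ({i | ∑ j, i j = 0} : Finset _) then 1 else 0 := by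
  ext i
  simp [cyclicGroupTensor]

/-- For a linearly ordered field `F`, `n ≥ 1` and `d ≥ 2`, the group tensor
`T_{ℤₙ}^d` has `rank_F(T_{ℤₙ}^d) ≤ d(n-1)+1`, while its monotone tensor rank over `F`
equals `n^{d-1}`. -/
theorem stmt16 (F : Type*) [Field F] [LinearOrder F] [IsStrictOrderedRing F] (n d : ℕ) (hn : 1 ≤ n) (hd : 2 ≤ d) :
    tensorRank F (cyclicGroupTensor F n d) ≤ d * (n - 1) + 1 ∧
      mrank F (cyclicGroupTensor F n d) = n ^ (d - 1) := by
  obtain ⟨m, rfl⟩ : ∃ m, d = m + 1 := ⟨d - 1, by omega⟩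
  have : NeZero n := ⟨by omega⟩
  constructor
  · refine tensorRank_le_of_eq_comp_sum _ ZMod.val (n - 1) (fun y => by have := ZMod.val_lt y; omega)
      (fun s => if (s : ZMod n) = 0 then 1 else 0) fun i => ?_
    simp [cyclicGroupTensor]
  · rw [cyclicGroupTensor_eq_indicator, mrank_indicator_eq_card, card_filter_sum_eq_zero,
      ZMod.card, Nat.add_sub_cancel]
    simp only [mem_filter, mem_univ, true_and]
    intro a ha b _ hab
    obtain ⟨q, hq, hqab⟩ := exists_mixture_sum_ne_zero ha hab
    exact ⟨q, by simpa using hq, hqab⟩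
end

section
/- Let F_q be the finite field with q elements, and let M_1,…,M_k be n × n matrices over F_q such that every nonzero F_q-linear combination c_1 M_1 + ⋯ + c_k M_k (with (c_1,…,c_k) ≠ 0) is invertible. Then the order-3 tensor T = [M_1|⋯|M_k] of size [n] × [n] × [k] has rank_{F_q}(T) ≥ ((q^k − 1)/(q^k − q^{k−1})) · n. -/
open Finset Matrix

theorem exists_eq_sum_of_rank3 {F : Type*} [Field F] {n1 n2 n3 : ℕ}
    (T : Fin n1 → Fin n2 → Fin n3 → F) :
    ∃ (a : Fin (rank3 T) → Fin n1 → F) (b : Fin (rank3 T) → Fin n2 → F)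
      (c : Fin (rank3 T) → Fin n3 → F), ∀ i j k, T i j k = ∑ l, a l i * b l j * c l k := by
  let e : Fin (n2 * n3) ≃ Fin n2 × Fin n3 := finProdFinEquiv.symm
  refine Nat.sInf_mem (s := {r : ℕ | ∃ (a : Fin r → Fin n1 → F) (b : Fin r → Fin n2 → F)
    (c : Fin r → Fin n3 → F), ∀ i j k, T i j k = ∑ l, a l i * b l j * c l k})
    ⟨n2 * n3, fun t i => T i (e t).1 (e t).2, fun t => Pi.single (e t).1 1,
    fun t => Pi.single (e t).2 1, fun i j k => ?_⟩
  rw [← e.symm.sum_comp]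
  simp [Fintype.sum_prod_type, Pi.single_apply]

section Rank

variable {K m n ι : Type*} [Field K] [Fintype n]

theorem Matrix.rank_add_le (A B : Matrix m n K) : (A + B).rank ≤ A.rank + B.rank := by
  rw [rank, rank, rank, mulVecLin_add]
  exact (Submodule.finrank_mono (LinearMap.range_add_le _ _)).trans
    (Submodule.finrank_add_le_finrank_add_finrank _ _)

theorem Matrix.rank_sum_le (s : Finset ι) (A : ι → Matrix m n K) :
    (∑ i ∈ s, A i).rank ≤ ∑ i ∈ s, (A i).rank :=
  Finset.sum_hom_rel (r := fun A k => rank A ≤ k) rank_zero.le fun _ _ _ h =>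
    (rank_add_le _ _).trans (by gcongr)

theorem Matrix.rank_sum_smul_vecMulVec_le [Fintype ι] [DecidableEq K] (w : ι → K)
    (u : ι → m → K) (v : ι → n → K) :
    (∑ i, w i • vecMulVec (u i) (v i)).rank ≤ #{i | w i ≠ 0} := by
  rw [← Finset.sum_filter_of_ne fun i _ hi => left_ne_zero_of_smul hi, card_eq_sum_ones]
  refine (rank_sum_le _ _).trans (sum_le_sum fun i _ => ?_)
  rw [← smul_vecMulVec]
  exact rank_vecMulVec_le _ _

end Rank

section Counting

variable {K : Type*} [Field K] [Fintype K] [DecidableEq K]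

theorem Module.Dual.card_filter_ne_zero {V : Type*} [AddCommGroup V] [Module K V] [Fintype V]
    {f : Module.Dual K V} (hf : f ≠ 0) :
    #{x | f x ≠ 0} =
      Fintype.card K ^ Module.finrank K V - Fintype.card K ^ (Module.finrank K V - 1) := by
  have hker : #{x | f x = 0} = Fintype.card K ^ (Module.finrank K V - 1) := by
    classical
    rw [← f.finrank_ker_add_one_of_ne_zero hf, Nat.add_sub_cancel, ← Nat.card_eq_fintype_card,
      ← Module.natCard_eq_pow_finrank, Nat.card_eq_fintype_card, Fintype.card_subtype]
    simp
  rw [← hker, ← Module.card_eq_pow_finrank, ← card_univ]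
  exact Nat.eq_sub_of_add_eq' (card_filter_add_card_filter_not _)

variable {κ : Type*} [Fintype κ] [DecidableEq κ]

theorem card_dotProduct_ne_zero_le (v : κ → K) :
    #{d | v ⬝ᵥ d ≠ 0} ≤
      Fintype.card K ^ Fintype.card κ - Fintype.card K ^ (Fintype.card κ - 1) := by
  rcases eq_or_ne v 0 with rfl | hv
  · simp
  obtain ⟨l, hl⟩ := Function.ne_iff.1 hv
  have hf : dotProductBilin K K v ≠ 0 := fun h => hl <| by
    simpa using LinearMap.congr_fun h (Pi.single l 1)
  have := Module.Dual.card_filter_ne_zero hf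
  simp only [dotProductBilin_apply_apply, Module.finrank_fintype_fun_eq_card] at this
  exact this.le

theorem card_sub_one_mul_le_of_le_card_dotProduct_ne_zero {ι : Type*} [Fintype ι]
    (c : ι → κ → K) (n : ℕ) (h : ∀ d : κ → K, d ≠ 0 → n ≤ #{t | c t ⬝ᵥ d ≠ 0}) :
    (Fintype.card K ^ Fintype.card κ - 1) * n ≤
      Fintype.card ι * (Fintype.card K ^ Fintype.card κ - Fintype.card K ^ (Fintype.card κ - 1)) :=
  calc (Fintype.card K ^ Fintype.card κ - 1) * n = ∑ d ∈ univ.erase 0, n := by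
        simp [card_erase_of_mem]
    _ ≤ ∑ d ∈ univ.erase 0, #{t | c t ⬝ᵥ d ≠ 0} :=
        sum_le_sum fun d hd => h d (ne_of_mem_erase hd)
    _ ≤ ∑ d, #{t | c t ⬝ᵥ d ≠ 0} := sum_le_sum_of_subset (subset_univ _)
    _ = ∑ t, #{d | c t ⬝ᵥ d ≠ 0} := sum_card_bipartiteAbove_eq_sum_card_bipartiteBelow _
    _ ≤ _ := (sum_le_sum fun t _ => card_dotProduct_ne_zero_le (c t)).trans_eq (by simp)

end Counting

theorem sum_smul_eq_sum_dotProduct_smul_vecMulVec {K m n κ ι : Type*} [CommSemiring K]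
    [Fintype κ] [Fintype ι] {M : κ → Matrix m n K} {a : ι → m → K} {b : ι → n → K}
    {c : ι → κ → K} (hM : ∀ i j l, M l i j = ∑ t, a t i * b t j * c t l) (d : κ → K) :
    ∑ l, d l • M l = ∑ t, (c t ⬝ᵥ d) • vecMulVec (a t) (b t) := by
  ext i j
  simp only [Matrix.sum_apply, Matrix.smul_apply, smul_eq_mul, hM, vecMulVec_apply, dotProduct,
    mul_sum, sum_mul]
  rw [sum_comm]
  exact sum_congr rfl fun t _ => sum_congr rfl fun l _ => by ring

theorem card_le_card_dotProduct_ne_zero_of_isUnit {K n κ ι : Type*} [Field K] [DecidableEq K]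
    [Fintype n] [DecidableEq n] [Fintype κ] [Fintype ι] {M : κ → Matrix n n K}
    {a : ι → n → K} {b : ι → n → K} {c : ι → κ → K}
    (hM : ∀ i j l, M l i j = ∑ t, a t i * b t j * c t l) {d : κ → K}
    (hd : IsUnit (∑ l, d l • M l)) : Fintype.card n ≤ #{t | c t ⬝ᵥ d ≠ 0} := by
  rw [← rank_of_isUnit _ hd, sum_smul_eq_sum_dotProduct_smul_vecMulVec hM]
  exact rank_sum_smul_vecMulVec_le _ _ _

theorem stmt17_general (F : Type*) [Field F] [Fintype F] (n k : ℕ)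
    (M : Fin k → Matrix (Fin n) (Fin n) F)
    (hM : ∀ c : Fin k → F, c ≠ 0 → IsUnit (∑ l, c l • M l)) :
    ((Fintype.card F : ℝ) ^ k - 1) /
        ((Fintype.card F : ℝ) ^ k - (Fintype.card F : ℝ) ^ (k - 1)) * n ≤
      (rank3 (fun (i j : Fin n) (l : Fin k) => M l i j) : ℝ) := by
  classical
  obtain ⟨a, b, c, hT⟩ := exists_eq_sum_of_rank3 fun (i j : Fin n) (l : Fin k) => M l i j
  have hcount := card_sub_one_mul_le_of_le_card_dotProduct_ne_zero c n fun d hd => by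
    simpa using card_le_card_dotProduct_ne_zero_of_isUnit hT (hM d hd)
  simp only [Fintype.card_fin] at hcount
  have hq : 1 ≤ Fintype.card F := Fintype.card_pos
  have hpow : Fintype.card F ^ (k - 1) ≤ Fintype.card F ^ k :=
    Nat.pow_le_pow_right hq (k.sub_le 1)
  -- the denominator vanishes only for `k = 0`, where the numerator does too
  rw [div_mul_eq_mul_div]
  refine div_le_of_le_mul₀ (sub_nonneg.2 (by exact_mod_cast hpow)) (Nat.cast_nonneg _) ?_
  have hreal := (Nat.cast_le (α := ℝ)).2 hcount
  push_cast [Nat.cast_sub (Nat.one_le_pow _ _ hq), Nat.cast_sub hpow] at hreal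
  exact hreal

/-- Let `F` be the finite field with `q` elements and `M₁,…,M_k` be `n × n` matrices over
`F` such that every nonzero linear combination of them is invertible.  Then the order-3
tensor `[M₁|⋯|M_k]` has rank at least `((q^k - 1)/(q^k - q^{k-1})) · n`. -/
theorem stmt17 (F : Type*) [Field F] [Fintype F] (n k : ℕ) (hk : 1 ≤ k)
    (M : Fin k → Matrix (Fin n) (Fin n) F)
    (hM : ∀ c : Fin k → F, c ≠ 0 → IsUnit (∑ l, c l • M l)) :
    ((Fintype.card F : ℝ) ^ k - 1) /
        ((Fintype.card F : ℝ) ^ k - (Fintype.card F : ℝ) ^ (k - 1)) * n ≤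
      (rank3 (fun (i j : Fin n) (l : Fin k) => M l i j) : ℝ) :=
  stmt17_general F n k M hM
end
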